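/- arXiv:1801.00367 — 4 statements merged into one kernel-verified Lean document; each statement's English description precedes it below -/
import Mathlib

section
/- Let u be a positive radial solution of (E) on (0,R) for some R > 0 such that lim_{r→0⁺} u(r) = γ for some γ > 0. Then lim_{r→0⁺} r^{n−1} u'(r) = 0 and lim_{r→0⁺} r^{s−1} u'(r) = −γ^{2*(s)−1}/(n−s). -/
/-!
Set `F(r) = r^{n-1} u'(r)`. The equation says `F'(r) = r^{n-s-1} φ(r)` with
`φ(r) = μ r^s u^q - u^{2*(s)-1} → -γ^{2*(s)-1}`, so near `0` the derivative `|F'|` is dominated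
by that of a multiple of `r^{n-s}`; hence `F` has a limit `L` at `0⁺`. If `L ≠ 0`, the mean
value theorem on `[r, 2r]` keeps `u(2r) - u(r)` away from `0`, contradicting the convergence
of `u`; so `L = 0`. L'Hôpital's rule applied to `F(r) / r^{n-s}` then gives the second limit.
-/

open Filter Set Real
open scoped Topology

noncomputable section

/-- The critical Hardy–Sobolev exponent `2*(s) = 2(n-s)/(n-2)`. -/
def twoStarS (n : ℕ) (s : ℝ) : ℝ := 2 * ((n : ℝ) - s) / ((n : ℝ) - 2)

/-- The radial form of the equation `-Δu = |x|^{-s} u^{2*(s)-1} - μ u^q` at a point `r`. -/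
def radialEq (n : ℕ) (s μ q : ℝ) (u : ℝ → ℝ) (r : ℝ) : Prop :=
  deriv (deriv u) r + (((n : ℝ) - 1) / r) * deriv u r
    + r ^ (-s) * u r ^ (twoStarS n s - 1) - μ * u r ^ q = 0

/-- A positive radial solution of (E) on a set `I ⊆ (0,∞)`. -/
def IsRadialSol (n : ℕ) (s μ q : ℝ) (I : Set ℝ) (u : ℝ → ℝ) : Prop :=
  ContDiffOn ℝ 2 u I ∧ (∀ r ∈ I, 0 < u r) ∧ ∀ r ∈ I, radialEq n s μ q u r

theorem tendsto_rpow_nhdsGT_zero {a : ℝ} (ha : 0 < a) :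
    Tendsto (fun x : ℝ => x ^ a) (𝓝[>] 0) (𝓝 0) := by
  simpa [zero_rpow ha.ne'] using
    (continuousAt_rpow_const 0 a (Or.inr ha.le)).tendsto.mono_left nhdsWithin_le_nhds

theorem monotoneOn_Ioo_of_hasDerivAt_nonneg {f f' : ℝ → ℝ} {a b : ℝ}
    (hf : ∀ x ∈ Ioo a b, HasDerivAt f (f' x) x) (hf' : ∀ x ∈ Ioo a b, 0 ≤ f' x) :
    MonotoneOn f (Ioo a b) :=
  monotoneOn_of_hasDerivWithinAt_nonneg (convex_Ioo a b)
    (fun x hx => (hf x hx).continuousAt.continuousWithinAt)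
    (fun x hx => (hf x (interior_subset hx)).hasDerivWithinAt)
    (fun x hx => hf' x (interior_subset hx))

theorem exists_tendsto_nhdsGT_of_abs_deriv_le {f f' g g' : ℝ → ℝ} {a b l : ℝ} (hab : a < b)
    (hf : ∀ x ∈ Ioo a b, HasDerivAt f (f' x) x) (hg : ∀ x ∈ Ioo a b, HasDerivAt g (g' x) x)
    (hle : ∀ x ∈ Ioo a b, |f' x| ≤ g' x) (hgl : Tendsto g (𝓝[>] a) (𝓝 l)) :
    ∃ L, Tendsto f (𝓝[>] a) (𝓝 L) := by
  have hsum : MonotoneOn (fun x => g x + f x) (Ioo a b) :=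
    monotoneOn_Ioo_of_hasDerivAt_nonneg (fun x hx => (hg x hx).add (hf x hx))
      fun x hx => by linarith [neg_abs_le (f' x), hle x hx]
  have hdiff : MonotoneOn (fun x => g x - f x) (Ioo a b) :=
    monotoneOn_Ioo_of_hasDerivAt_nonneg (fun x hx => (hg x hx).sub (hf x hx))
      fun x hx => by linarith [le_abs_self (f' x), hle x hx]
  have hg_mono : MonotoneOn g (Ioo a b) :=
    monotoneOn_Ioo_of_hasDerivAt_nonneg hg fun x hx => (abs_nonneg _).trans (hle x hx)
  have hg_ge : ∀ x ∈ Ioo a b, l ≤ g x := fun x hx =>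
    le_of_tendsto hgl <| mem_of_superset (Ioo_mem_nhdsGT hx.1) fun y hy =>
      hg_mono ⟨hy.1, hy.2.trans hx.2⟩ hx hy.2.le
  obtain ⟨c, hac, hcb⟩ := exists_between hab
  have hbdd : BddBelow ((fun x => g x + f x) '' Ioo a c) := by
    refine ⟨2 * l - (g c - f c), ?_⟩
    rintro _ ⟨x, hx, rfl⟩
    have hxb : x ∈ Ioo a b := ⟨hx.1, hx.2.trans hcb⟩
    linarith [hg_ge x hxb, hdiff hxb ⟨hac, hcb⟩ hx.2.le]
  have hlim := (hsum.mono (Ioo_subset_Ioo_right hcb.le)).tendsto_nhdsWithin_Ioo_right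
    (nonempty_Ioo.2 hac) hbdd
  exact ⟨_, (hlim.sub hgl).congr fun x => add_sub_cancel_left (g x) (f x)⟩

section PowerWeight

variable {F φ : ℝ → ℝ} {a b ℓ : ℝ}

theorem exists_tendsto_nhdsGT_zero_of_hasDerivAt_rpow_mul (ha : 0 < a) (hb : 0 < b)
    (hF : ∀ x ∈ Ioo 0 b, HasDerivAt F (x ^ (a - 1) * φ x) x)
    (hφ : Tendsto φ (𝓝[>] 0) (𝓝 ℓ)) :
    ∃ L, Tendsto F (𝓝[>] 0) (𝓝 L) := by
  obtain ⟨c, hc, hc_sub⟩ := mem_nhdsGT_iff_exists_Ioo_subset.1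
    (hφ.abs.eventually (eventually_le_nhds (lt_add_one |ℓ|)))
  have hd : 0 < min b c := lt_min hb hc
  have hsub : Ioo 0 (min b c) ⊆ Ioo 0 b := Ioo_subset_Ioo_right (min_le_left b c)
  refine exists_tendsto_nhdsGT_of_abs_deriv_le hd (fun x hx => hF x (hsub hx))
    (g := fun x => (|ℓ| + 1) * (x ^ a / a)) (g' := fun x => (|ℓ| + 1) * x ^ (a - 1))
    (fun x hx => ?_) (fun x hx => ?_) (l := 0) ?_
  · refine (((hasDerivAt_rpow_const (p := a) (Or.inl hx.1.ne')).div_const a).const_mul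
      (|ℓ| + 1)).congr_deriv ?_
    field_simp
  · have hφx : |φ x| ≤ |ℓ| + 1 :=
      hc_sub ⟨hx.1, hx.2.trans_le (min_le_right b c)⟩
    rw [abs_mul, abs_of_nonneg (rpow_nonneg hx.1.le _), mul_comm]
    exact mul_le_mul_of_nonneg_right hφx (rpow_nonneg hx.1.le _)
  · simpa using ((tendsto_rpow_nhdsGT_zero ha).div_const a).const_mul (|ℓ| + 1)

theorem tendsto_div_rpow_of_hasDerivAt_rpow_mul (ha : 0 < a) (hb : 0 < b)
    (hF : ∀ x ∈ Ioo 0 b, HasDerivAt F (x ^ (a - 1) * φ x) x)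
    (hF0 : Tendsto F (𝓝[>] 0) (𝓝 0)) (hφ : Tendsto φ (𝓝[>] 0) (𝓝 ℓ)) :
    Tendsto (fun x => F x / x ^ a) (𝓝[>] 0) (𝓝 (ℓ / a)) := by
  refine HasDerivAt.lhopital_zero_right_on_Ioo hb hF
    (fun x hx => hasDerivAt_rpow_const (p := a) (Or.inl hx.1.ne'))
    (fun x hx => mul_ne_zero ha.ne' (rpow_pos_of_pos hx.1 _).ne') hF0
    (tendsto_rpow_nhdsGT_zero ha) ((hφ.div_const a).congr' ?_)
  filter_upwards [self_mem_nhdsWithin] with x hx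
  have : x ^ (a - 1) ≠ 0 := (rpow_pos_of_pos hx _).ne'
  field_simp

end PowerWeight

theorem eq_zero_of_tendsto_rpow_mul_deriv {f f' : ℝ → ℝ} {a b γ L : ℝ} (ha : 1 ≤ a)
    (hb : 0 < b) (hf : ∀ x ∈ Ioo 0 b, HasDerivAt f (f' x) x)
    (hfγ : Tendsto f (𝓝[>] 0) (𝓝 γ))
    (hL : Tendsto (fun x => x ^ a * f' x) (𝓝[>] 0) (𝓝 L)) : L = 0 := by
  by_contra hL0
  have hLpos : 0 < |L| := abs_pos.2 hL0
  obtain ⟨δ, hδ, hδ_sub⟩ := mem_nhdsGT_iff_exists_Ioo_subset.1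
    (hL.abs.eventually (eventually_gt_nhds (half_lt_self hLpos)))
  have hdouble : Tendsto (fun x => 2 * x) (𝓝[>] (0 : ℝ)) (𝓝[>] 0) :=
    tendsto_nhdsWithin_of_tendsto_nhds_of_eventually_within _
      (by simpa using ((continuous_const_mul (2 : ℝ)).tendsto 0).mono_left nhdsWithin_le_nhds)
      (eventually_nhdsWithin_of_forall fun x (hx : 0 < x) => by simp [hx])
  have hjump : Tendsto (fun x => f (2 * x) - f x) (𝓝[>] 0) (𝓝 0) := by
    simpa using (hfγ.comp hdouble).sub hfγ
  have hm : 0 < min (min δ b) 1 := lt_min (lt_min hδ hb) one_pos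
  have hjump_small : ∀ᶠ x in 𝓝[>] 0, |f (2 * x) - f x| < |L| / 4 :=
    hjump.abs.eventually (eventually_lt_nhds (by rw [abs_zero]; exact div_pos hLpos four_pos))
  obtain ⟨x, hx0, hx2, hjx⟩ := (eventually_mem_nhdsWithin.and
    ((hdouble.eventually (Ioo_mem_nhdsGT hm)).and hjump_small)).exists
  simp only [mem_Ioi, lt_min_iff] at hx0 hx2
  have hxb : Icc x (2 * x) ⊆ Ioo 0 b := Icc_subset_Ioo hx0 (by linarith)
  obtain ⟨ξ, hξ, hξf⟩ := exists_hasDerivAt_eq_slope f f' (by linarith)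
    (fun y hy => (hf y (hxb hy)).continuousAt.continuousWithinAt)
    (fun y hy => hf y (hxb (Ioo_subset_Icc_self hy)))
  have hξ0 : 0 < ξ := hx0.trans hξ.1
  have hξa : ξ ^ a ≤ 2 * x :=
    (rpow_le_rpow_of_exponent_ge hξ0 (by linarith [hξ.2]) ha).trans_eq (rpow_one ξ) |>.trans
      hξ.2.le
  have hlarge : |L| / 2 < |ξ ^ a * f' ξ| := hδ_sub ⟨hξ0, by linarith [hξ.2]⟩
  rw [hξf, show 2 * x - x = x by ring, abs_mul, abs_div, abs_of_pos hx0,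
    abs_of_pos (rpow_pos_of_pos hξ0 a)] at hlarge
  have hsmall : ξ ^ a * (|f (2 * x) - f x| / x) ≤ 2 * |f (2 * x) - f x| := by
    rw [mul_div_assoc', div_le_iff₀ hx0]
    nlinarith [abs_nonneg (f (2 * x) - f x)]
  linarith

namespace IsRadialSol

variable {n : ℕ} {s μ q R r : ℝ} {u : ℝ → ℝ}

theorem hasDerivAt (hu : IsRadialSol n s μ q (Ioo 0 R) u) (hr : r ∈ Ioo 0 R) :
    HasDerivAt u (deriv u r) r :=
  (hu.1.differentiableOn two_ne_zero r hr).differentiableAt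
    (isOpen_Ioo.mem_nhds hr) |>.hasDerivAt

theorem hasDerivAt_deriv (hu : IsRadialSol n s μ q (Ioo 0 R) u) (hr : r ∈ Ioo 0 R) :
    HasDerivAt (deriv u) (deriv (deriv u) r) r :=
  ((hu.1.deriv_of_isOpen isOpen_Ioo (by norm_num)).differentiableOn one_ne_zero r
    hr).differentiableAt (isOpen_Ioo.mem_nhds hr) |>.hasDerivAt

theorem hasDerivAt_flux (hu : IsRadialSol n s μ q (Ioo 0 R) u) (hr : r ∈ Ioo 0 R) :
    HasDerivAt (fun r => r ^ ((n : ℝ) - 1) * deriv u r)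
      (r ^ ((n : ℝ) - s - 1) * (μ * r ^ s * u r ^ q - u r ^ (twoStarS n s - 1))) r := by
  have hr0 : 0 < r := hr.1
  refine ((hasDerivAt_rpow_const (Or.inl hr0.ne')).mul (hu.hasDerivAt_deriv hr)).congr_deriv ?_
  have heq := hu.2.2 r hr
  rw [radialEq] at heq
  have h1 : r ^ ((n : ℝ) - 1) = r ^ ((n : ℝ) - s - 1) * r ^ s := by
    rw [← rpow_add hr0]; ring_nf
  have h2 : r ^ ((n : ℝ) - 1 - 1) = r ^ ((n : ℝ) - 1) / r := rpow_sub_one hr0.ne' _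
  have h3 : r ^ (-s) = (r ^ s)⁻¹ := rpow_neg hr0.le s
  have hdd : deriv (deriv u) r = μ * u r ^ q - (r ^ s)⁻¹ * u r ^ (twoStarS n s - 1)
      - ((n : ℝ) - 1) / r * deriv u r := by
    rw [h3] at heq; linarith
  rw [h2, h1, hdd]
  field_simp
  ring

end IsRadialSol

theorem stmt1_general (n : ℕ) (hn : 3 ≤ n) (s μ q : ℝ) (hs0 : 0 < s) (hs2 : s < 2)
    (R : ℝ) (hR : 0 < R) (u : ℝ → ℝ)
    (hu : IsRadialSol n s μ q (Set.Ioo 0 R) u)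
    (γ : ℝ) (hγ : 0 < γ) (hlim : Tendsto u (𝓝[>] (0 : ℝ)) (𝓝 γ)) :
    Tendsto (fun r : ℝ => r ^ ((n : ℝ) - 1) * deriv u r) (𝓝[>] (0 : ℝ)) (𝓝 0) ∧
    Tendsto (fun r : ℝ => r ^ (s - 1) * deriv u r) (𝓝[>] (0 : ℝ))
      (𝓝 (-(γ ^ (twoStarS n s - 1)) / ((n : ℝ) - s))) := by
  have hn3 : (3 : ℝ) ≤ n := by exact_mod_cast hn
  have hns : 0 < (n : ℝ) - s := by linarith
  have hφ : Tendsto (fun r => μ * r ^ s * u r ^ q - u r ^ (twoStarS n s - 1)) (𝓝[>] 0)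
      (𝓝 (-(γ ^ (twoStarS n s - 1)))) := by
    simpa using (((tendsto_rpow_nhdsGT_zero hs0).const_mul μ).mul
      (hlim.rpow_const (Or.inl hγ.ne'))).sub (hlim.rpow_const (Or.inl hγ.ne'))
  have hflux := fun r (hr : r ∈ Ioo 0 R) => hu.hasDerivAt_flux hr
  obtain ⟨L, hL⟩ := exists_tendsto_nhdsGT_zero_of_hasDerivAt_rpow_mul hns hR hflux hφ
  obtain rfl : L = 0 := eq_zero_of_tendsto_rpow_mul_deriv (by linarith) hR
    (fun r hr => hu.hasDerivAt hr) hlim hL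
  refine ⟨hL, (tendsto_div_rpow_of_hasDerivAt_rpow_mul hns hR hflux hL hφ).congr' ?_⟩
  filter_upwards [self_mem_nhdsWithin] with r (hr : 0 < r)
  rw [mul_div_right_comm, ← rpow_sub hr]
  ring_nf

theorem stmt1 (n : ℕ) (hn : 3 ≤ n) (s μ q : ℝ) (hs0 : 0 < s) (hs2 : s < 2)
    (hμ : 0 < μ) (hq : 1 < q) (R : ℝ) (hR : 0 < R) (u : ℝ → ℝ)
    (hu : IsRadialSol n s μ q (Set.Ioo 0 R) u)
    (γ : ℝ) (hγ : 0 < γ) (hlim : Tendsto u (𝓝[>] (0 : ℝ)) (𝓝 γ)) :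
    Tendsto (fun r : ℝ => r ^ ((n : ℝ) - 1) * deriv u r) (𝓝[>] (0 : ℝ)) (𝓝 0) ∧
    Tendsto (fun r : ℝ => r ^ (s - 1) * deriv u r) (𝓝[>] (0 : ℝ))
      (𝓝 (-(γ ^ (twoStarS n s - 1)) / ((n : ℝ) - s))) :=
  stmt1_general n hn s μ q hs0 hs2 R hR u hu γ hγ hlim

end
end

section
/- Let 1 < q < 2* − 1 and R > 0. There is no function u ∈ C²((0,R]) with u > 0 on (0,R), u(R) = 0, satisfying the equation u''(r) + ((n−1)/r)·u'(r) + r^{−s}·u(r)^{2*(s)−1} − μ·u(r)^q = 0 for all r ∈ (0,R), and such that limsup_{r→0⁺} r^{(n−2)/2} u(r) < ∞. (This is the radial form, on a ball, of the nonexistence of positive smooth solutions of the Dirichlet problem −Δu = |x|^{−s}u^{2*(s)−1} − μu^q in Ω∖{0}, u = 0 on ∂Ω, for star-shaped Ω, among solutions that are not of (ND) type.) -/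
/-!
With `r = e^{-t}`, `α = (n-2)/2` and `p = 2*(s)`, the Emden–Fowler variable
`v(t) = r^α u(r)` solves `v'' = α²v - v^(p-1) + μ e^{-δt} v^q` on `(-log R, ∞)`, where
`δ = n - α(q+1) > 0` because `q < 2* - 1`. The energy
`v'²/2 - α²v²/2 + v^p/p - μ e^{-δt} v^(q+1)/(q+1)` is strictly increasing and tends to a
nonnegative value as `t → -log R` (where `v → 0`), so it is eventually at least some `e₀ > 0`;
the limsup hypothesis says that `v` is bounded.
Let `b` be the positive zero of the potential `α²v²/2 - v^p/p`. Below `b` the speed `|v'|` is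
at least `√(2e₀)`, above `b` the force is uniformly negative for large `t`. Hence once `v ≤ b`
with `v' ≤ 0`, it keeps decreasing at speed `√(2e₀)`; otherwise `v` crosses `b` only upwards
and then stays above `b`, where it is uniformly concave. Either way `v` becomes negative.
-/

open Filter Set Real
open scoped Topology ENNReal

noncomputable section

/-- The critical Sobolev exponent `2* = 2n/(n-2)`. -/
def twoStar (n : ℕ) : ℝ := 2 * (n : ℝ) / ((n : ℝ) - 2)

/-- `limsup_{r→0⁺} r^{(n-2)/2} u(r) < ∞`, phrased via the `ℝ≥0∞`-valued limsup. -/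
def UpliBound (n : ℕ) (u : ℝ → ℝ) : Prop :=
  Filter.limsup (fun r : ℝ => ENNReal.ofReal (r ^ (((n : ℝ) - 2) / 2) * u r))
    (𝓝[>] (0 : ℝ)) < ⊤

lemma hasDerivAt_exp_neg_mul (α t : ℝ) :
    HasDerivAt (fun t => exp (-(α * t))) (-α * exp (-(α * t))) t := by
  simpa [mul_comm] using ((hasDerivAt_id t).const_mul α).neg.exp

lemma eventually_nhdsGT_lt_of_hasDerivAt_neg {f : ℝ → ℝ} {f' x : ℝ} (hf : HasDerivAt f f' x)
    (hf' : f' < 0) : ∀ᶠ y in 𝓝[>] x, f y < f x := by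
  have hslope := (hasDerivWithinAt_iff_tendsto_slope' (lt_irrefl x)).1
    (hf.hasDerivWithinAt (s := Ioi x))
  filter_upwards [hslope (Iio_mem_nhds hf'), self_mem_nhdsWithin] with y hy hxy
  rw [mem_preimage, mem_Iio, slope_def_field, div_neg_iff] at hy
  rcases hy with ⟨-, hy⟩ | ⟨hy, -⟩
  · exact absurd hy (not_lt.2 (sub_pos.2 hxy).le)
  · linarith

lemma eventually_nhdsGT_gt_of_hasDerivAt_pos {f : ℝ → ℝ} {f' x : ℝ} (hf : HasDerivAt f f' x)
    (hf' : 0 < f') : ∀ᶠ y in 𝓝[>] x, f x < f y := by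
  filter_upwards [eventually_nhdsGT_lt_of_hasDerivAt_neg hf.neg (neg_neg_of_pos hf')] with y hy
  exact neg_lt_neg_iff.1 hy

lemma tendsto_atBot_of_hasDerivAt_le_neg {f f' : ℝ → ℝ} {c : ℝ} (hc : 0 < c)
    (hf : ∀ᶠ x in atTop, HasDerivAt f (f' x) x) (hf' : ∀ᶠ x in atTop, f' x ≤ -c) :
    Tendsto f atTop atBot := by
  obtain ⟨a, ha⟩ := eventually_atTop.1 (hf.and hf')
  have hlin : Tendsto (fun x => f a + -c * (x - a)) atTop atBot :=
    tendsto_atBot_add_const_left _ _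
      ((tendsto_atTop_add_const_right _ _ tendsto_id).const_mul_atTop_of_neg (neg_lt_zero.2 hc))
  refine tendsto_atBot_mono' _ (eventually_atTop.2 ⟨a, fun x hx => ?_⟩) hlin
  have := (convex_Ici a).image_sub_le_mul_sub_of_deriv_le
    (fun y hy => (ha y hy).1.continuousAt.continuousWithinAt)
    (fun y hy => (ha y (interior_subset hy)).1.differentiableAt.differentiableWithinAt)
    (fun y hy => (ha y (interior_subset hy)).1.deriv ▸ (ha y (interior_subset hy)).2)
    a self_mem_Ici x hx hx
  linarith

lemma tendsto_atTop_of_hasDerivAt_ge_pos {f f' : ℝ → ℝ} {c : ℝ} (hc : 0 < c)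
    (hf : ∀ᶠ x in atTop, HasDerivAt f (f' x) x) (hf' : ∀ᶠ x in atTop, c ≤ f' x) :
    Tendsto f atTop atTop := by
  refine tendsto_neg_atBot_iff.1 (tendsto_atBot_of_hasDerivAt_le_neg hc (f' := -f') ?_ ?_)
  · filter_upwards [hf] with x hx using hx.neg
  · filter_upwards [hf'] with x hx using neg_le_neg hx

lemma Ici_subset_of_forall_mem_nhdsGT {s : Set ℝ} {a : ℝ} (hs : IsClosed (Ici a ∩ s))
    (ha : a ∈ s) (hgt : ∀ x ∈ s, a ≤ x → s ∈ 𝓝[>] x) : Ici a ⊆ s := by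
  intro b hb
  have hclosed : IsClosed (s ∩ Icc a b) := by
    rw [← Ici_inter_Iic, ← inter_assoc, inter_comm s]
    exact hs.inter isClosed_Iic
  exact hclosed.Icc_subset_of_forall_mem_nhdsWithin ha (fun x hx => hgt x hx.1 hx.2.1)
    ⟨hb, le_rfl⟩

-- Below `b` the speed never vanishes, so a descent below `b` can never be stopped.
lemma tendsto_atBot_of_speed_ge_below {v v' : ℝ → ℝ} {b c t₀ : ℝ} (hc : 0 < c)
    (hv : ∀ t ≥ t₀, HasDerivAt v (v' t) t) (hv' : ∀ t ≥ t₀, ContinuousAt v' t)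
    (hlow : ∀ t ≥ t₀, v t ≤ b → c ≤ |v' t|) (hb : v t₀ ≤ b) (h0 : v' t₀ ≤ 0) :
    Tendsto v atTop atBot := by
  have hinv : Ici t₀ ⊆ {t | v t ≤ b ∧ v' t ≤ 0} := by
    refine Ici_subset_of_forall_mem_nhdsGT ?_ ⟨hb, h0⟩ fun x ⟨hxb, hx0⟩ hx => ?_
    · have hcont : ContinuousOn (fun t => (v t, v' t)) (Ici t₀) := fun t ht =>
        ((hv t ht).continuousAt.prodMk (hv' t ht)).continuousWithinAt
      exact hcont.preimage_isClosed_of_isClosed isClosed_Ici (isClosed_Iic.prod isClosed_Iic)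
    · have hneg : v' x < 0 := by
        have := hlow x hx hxb
        rw [abs_of_nonpos hx0] at this
        linarith
      filter_upwards [eventually_nhdsGT_lt_of_hasDerivAt_neg (hv x hx) hneg,
        nhdsWithin_le_nhds ((hv' x hx).eventually_lt continuousAt_const hneg)]
        with y hy hy' using ⟨hy.le.trans hxb, hy'.le⟩
  refine tendsto_atBot_of_hasDerivAt_le_neg hc (eventually_atTop.2 ⟨t₀, hv⟩)
    (eventually_atTop.2 ⟨t₀, fun t ht => ?_⟩)
  obtain ⟨htb, ht0⟩ := hinv ht
  have := hlow t ht htb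
  rw [abs_of_nonpos ht0] at this
  linarith

-- At the level `b` itself `v` is increasing, so `v` can cross `b` only upwards.
lemma forall_ge_le_of_deriv_pos_below {v v' : ℝ → ℝ} {b τ : ℝ}
    (hv : ∀ t ≥ τ, HasDerivAt v (v' t) t) (hrise : ∀ t ≥ τ, v t ≤ b → 0 < v' t)
    (hτ : b ≤ v τ) : ∀ t ≥ τ, b ≤ v t := by
  refine Ici_subset_of_forall_mem_nhdsGT ?_ hτ fun x (hxb : b ≤ v x) hx => ?_
  · exact ContinuousOn.preimage_isClosed_of_isClosed
      (fun t ht => (hv t ht).continuousAt.continuousWithinAt) isClosed_Ici isClosed_Ici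
  rcases hxb.eq_or_lt with hxb | hxb
  · filter_upwards [eventually_nhdsGT_gt_of_hasDerivAt_pos (hv x hx) (hrise x hx hxb.ge)]
      with y hy using hxb.le.trans hy.le
  · exact nhdsWithin_le_nhds
      (continuousAt_const.eventually_lt (hv x hx).continuousAt hxb |>.mono fun y hy => hy.le)

theorem not_eventually_pos_of_fast_below_of_concave_above {v v' v'' : ℝ → ℝ} {b c k : ℝ}
    (hc : 0 < c) (hk : 0 < k) (hv : ∀ᶠ t in atTop, HasDerivAt v (v' t) t)
    (hv' : ∀ᶠ t in atTop, HasDerivAt v' (v'' t) t)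
    (hlow : ∀ᶠ t in atTop, v t ≤ b → c ≤ |v' t|)
    (hhigh : ∀ᶠ t in atTop, b ≤ v t → v'' t ≤ -k) :
    ¬ ∀ᶠ t in atTop, 0 < v t := by
  intro hpos
  have not_atBot : ¬ Tendsto v atTop atBot := fun h => by
    obtain ⟨t, hneg, hpos⟩ := ((h.eventually_lt_atBot 0).and hpos).exists
    linarith
  have not_above : ¬ ∀ᶠ t in atTop, b ≤ v t := fun h =>
    not_atBot <| tendsto_atBot_of_hasDerivAt_le_neg one_pos hv <|
      (tendsto_atBot_of_hasDerivAt_le_neg hk hv' (by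
        filter_upwards [h, hhigh] with t hb ht using ht hb)).eventually_le_atBot (-1)
  obtain ⟨T, hT⟩ := eventually_atTop.1 (hv.and (hv'.and hlow))
  have hrise : ∀ t ≥ T, v t ≤ b → c ≤ v' t := fun t ht hb => by
    refine (le_abs'.1 ((hT t ht).2.2 hb)).resolve_left fun hneg => not_atBot ?_
    exact tendsto_atBot_of_speed_ge_below hc (fun s hs => (hT s (ht.trans hs)).1)
      (fun s hs => (hT s (ht.trans hs)).2.1.continuousAt) (fun s hs => (hT s (ht.trans hs)).2.2)
      hb (by linarith)
  obtain ⟨τ, hτT, hτ⟩ : ∃ τ ≥ T, b ≤ v τ := by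
    by_contra! h
    have hup := tendsto_atTop_of_hasDerivAt_ge_pos hc hv
      (eventually_atTop.2 ⟨T, fun t ht => hrise t ht (h t ht).le⟩)
    obtain ⟨t, ht, htT⟩ := ((hup.eventually_ge_atTop b).and (eventually_ge_atTop T)).exists
    exact (h t htT).not_ge ht
  exact not_above (eventually_atTop.2 ⟨τ, forall_ge_le_of_deriv_pos_below
    (fun t ht => (hT t (hτT.trans ht)).1)
    (fun t ht hb => hc.trans_le (hrise t (hτT.trans ht) hb)) hτ⟩)

def emdenFowlerEnergy (α p μ q δ : ℝ) (v v' : ℝ → ℝ) (t : ℝ) : ℝ :=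
  v' t ^ 2 / 2 - α ^ 2 * v t ^ 2 / 2 + v t ^ p / p
    - μ * exp (-(δ * t)) * v t ^ (q + 1) / (q + 1)

section EmdenFowlerEnergy

variable {α p μ q δ : ℝ} {v v' : ℝ → ℝ}

lemma hasDerivAt_emdenFowlerEnergy {t : ℝ} (hp : p ≠ 0) (hq : q + 1 ≠ 0) (hpos : 0 < v t)
    (hv : HasDerivAt v (v' t) t)
    (hv' : HasDerivAt v' (α ^ 2 * v t - v t ^ (p - 1) + μ * exp (-(δ * t)) * v t ^ q) t) :
    HasDerivAt (emdenFowlerEnergy α p μ q δ v v')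
      (δ * μ * exp (-(δ * t)) * v t ^ (q + 1) / (q + 1)) t := by
  have hvp := (hv.rpow_const (p := p) (Or.inl hpos.ne')).div_const p
  have hvq := hv.rpow_const (p := q + 1) (Or.inl hpos.ne')
  have := ((((hv'.pow 2).div_const 2).sub (((hv.pow 2).const_mul (α ^ 2)).div_const 2)).add
    hvp).sub ((((hasDerivAt_exp_neg_mul δ t).const_mul μ).mul hvq).div_const (q + 1))
  unfold emdenFowlerEnergy
  refine this.congr_deriv ?_
  rw [add_sub_cancel_right]
  field_simp
  ring

theorem exists_pos_eventually_le_emdenFowlerEnergy {a : ℝ} (hp : 0 < p) (hμ : 0 < μ)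
    (hq : 0 < q + 1) (hδ : 0 < δ) (hpos : ∀ t > a, 0 < v t)
    (hv : ∀ t > a, HasDerivAt v (v' t) t)
    (hv' : ∀ t > a,
      HasDerivAt v' (α ^ 2 * v t - v t ^ (p - 1) + μ * exp (-(δ * t)) * v t ^ q) t)
    (hlim : Tendsto v (𝓝[>] a) (𝓝 0)) :
    ∃ e₀ > 0, ∀ᶠ t in atTop, e₀ ≤ emdenFowlerEnergy α p μ q δ v v' t := by
  set E := emdenFowlerEnergy α p μ q δ v v'
  have hE : ∀ t > a, HasDerivAt E (δ * μ * exp (-(δ * t)) * v t ^ (q + 1) / (q + 1)) t :=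
    fun t ht => hasDerivAt_emdenFowlerEnergy hp.ne' hq.ne' (hpos t ht) (hv t ht) (hv' t ht)
  have hmono : StrictMonoOn E (Ioi a) := by
    refine strictMonoOn_of_deriv_pos (convex_Ioi a)
      (fun t ht => (hE t ht).continuousAt.continuousWithinAt) fun t ht => ?_
    rw [interior_Ioi] at ht
    have := hpos t ht
    rw [(hE t ht).deriv]
    positivity
  set lower := fun t => -(α ^ 2 * v t ^ 2 / 2 + μ * exp (-(δ * t)) * v t ^ (q + 1) / (q + 1))
  have hlower : Tendsto lower (𝓝[>] a) (𝓝 0) := by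
    have hexp : Tendsto (fun t => exp (-(δ * t))) (𝓝[>] a) (𝓝 (exp (-(δ * a)))) :=
      (by fun_prop : Continuous fun t => exp (-(δ * t))).continuousWithinAt
    have hvq : Tendsto (fun t => v t ^ (q + 1)) (𝓝[>] a) (𝓝 0) := by
      simpa [Function.comp_def, zero_rpow hq.ne'] using
        (continuousAt_rpow_const 0 (q + 1) (Or.inr hq.le)).tendsto.comp hlim
    have := ((((hlim.pow 2).const_mul (α ^ 2)).div_const 2).add
      (((hexp.const_mul μ).mul hvq).div_const (q + 1))).neg
    rwa [zero_pow two_ne_zero, mul_zero, mul_zero, zero_div, zero_div, add_zero, neg_zero] at this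
  have hlower_le : ∀ t > a, lower t ≤ E t := fun t ht => by
    have := hpos t ht
    have : 0 ≤ v t ^ p / p := by positivity
    simp only [lower, E, emdenFowlerEnergy]
    nlinarith [sq_nonneg (v' t)]
  have hhalf : a < a + 1 / 2 := by linarith
  have hone : a < a + 1 := by linarith
  have hE_half : 0 ≤ E (a + 1 / 2) := le_of_tendsto hlower <| by
    filter_upwards [Ioo_mem_nhdsGT hhalf] with t ht
    exact (hlower_le t ht.1).trans (hmono ht.1 hhalf ht.2).le
  refine ⟨E (a + 1), hE_half.trans_lt (hmono hhalf hone (by linarith)),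
    eventually_atTop.2 ⟨a + 1, fun t ht => ?_⟩⟩
  exact hmono.monotoneOn hone (hone.trans_le ht) ht

theorem not_eventually_pos_of_le_emdenFowlerEnergy {M e₀ : ℝ} (hα : α ≠ 0) (hp : 2 < p)
    (hμ : 0 ≤ μ) (hq : 0 ≤ q) (hδ : 0 < δ) (he₀ : 0 < e₀)
    (hv : ∀ᶠ t in atTop, HasDerivAt v (v' t) t)
    (hv' : ∀ᶠ t in atTop,
      HasDerivAt v' (α ^ 2 * v t - v t ^ (p - 1) + μ * exp (-(δ * t)) * v t ^ q) t)
    (hM : ∀ᶠ t in atTop, v t ≤ M)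
    (hE : ∀ᶠ t in atTop, e₀ ≤ emdenFowlerEnergy α p μ q δ v v' t) :
    ¬ ∀ᶠ t in atTop, 0 < v t := by
  intro hpos
  set K := p * α ^ 2 / 2
  have hα2 : 0 < α ^ 2 := by positivity
  have hαK : α ^ 2 < K := by
    simp only [K]
    nlinarith
  -- `b` is the positive zero of the potential `α²v²/2 - v^p/p`.
  set b := K ^ (p - 2)⁻¹
  have hb : 0 < b := rpow_pos_of_pos (by linarith) _
  have hbK : b ^ (p - 2) = K := rpow_inv_rpow (by linarith) (by linarith)
  have hlow : ∀ᶠ t in atTop, v t ≤ b → √(2 * e₀) ≤ |v' t| := by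
    filter_upwards [hpos, hE] with t hvt hEt hvb
    have hKv : v t ^ (p - 2) ≤ K := hbK ▸ rpow_le_rpow hvt.le hvb (by linarith)
    have hvp : v t ^ p = v t ^ (p - 2) * v t ^ 2 := by
      rw [← rpow_natCast, ← rpow_add hvt]
      norm_num
    have hpot : v t ^ p / p ≤ α ^ 2 * v t ^ 2 / 2 := by
      rw [div_le_iff₀ (by linarith), hvp]
      calc v t ^ (p - 2) * v t ^ 2 ≤ K * v t ^ 2 := by gcongr
        _ = α ^ 2 * v t ^ 2 / 2 * p := by simp only [K]; ring
    have hμv : 0 ≤ μ * exp (-(δ * t)) * v t ^ (q + 1) / (q + 1) := by positivity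
    unfold emdenFowlerEnergy at hEt
    exact (sqrt_le_sqrt (by linarith)).trans_eq (sqrt_sq_eq_abs _)
  set m := b * (K - α ^ 2)
  have hm : 0 < m := mul_pos hb (by linarith)
  have hdecay : Tendsto (fun t => μ * exp (-(δ * t)) * M ^ q) atTop (𝓝 0) := by
    simpa using ((tendsto_exp_neg_atTop_nhds_zero.comp
      (tendsto_id.const_mul_atTop hδ)).const_mul μ).mul_const (M ^ q)
  have hhigh : ∀ᶠ t in atTop,
      b ≤ v t → α ^ 2 * v t - v t ^ (p - 1) + μ * exp (-(δ * t)) * v t ^ q ≤ -(m / 2) := by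
    filter_upwards [hpos, hM, hdecay.eventually (Iio_mem_nhds (half_pos hm))]
      with t hvt hvM hsmall hbv
    have hKv : K ≤ v t ^ (p - 2) := hbK ▸ rpow_le_rpow hb.le hbv (by linarith)
    have hvp : v t ^ (p - 1) = v t ^ (p - 2) * v t := by
      rw [← rpow_add_one hvt.ne']
      ring_nf
    have hforce : μ * exp (-(δ * t)) * v t ^ q ≤ μ * exp (-(δ * t)) * M ^ q := by
      gcongr
    have : α ^ 2 * v t - v t ^ (p - 1) ≤ -m := by
      rw [hvp]
      nlinarith
    linarith
  exact not_eventually_pos_of_fast_below_of_concave_above (sqrt_pos.2 (by linarith))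
    (half_pos hm) hv hv' hlow hhigh hpos

end EmdenFowlerEnergy

def emdenFowler (α : ℝ) (u : ℝ → ℝ) (t : ℝ) : ℝ := exp (-(α * t)) * u (exp (-t))

def emdenFowlerDeriv (α : ℝ) (u u' : ℝ → ℝ) (t : ℝ) : ℝ :=
  -(exp (-(α * t)) * (α * u (exp (-t)) + exp (-t) * u' (exp (-t))))

section EmdenFowler

variable {α t : ℝ} {u u' u'' : ℝ → ℝ}

lemma hasDerivAt_emdenFowler (hu : HasDerivAt u (u' (exp (-t))) (exp (-t))) :
    HasDerivAt (emdenFowler α u) (emdenFowlerDeriv α u u' t) t := by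
  have := (hasDerivAt_exp_neg_mul α t).mul (hu.comp t (by simpa using hasDerivAt_exp_neg_mul 1 t))
  refine this.congr_deriv ?_
  simp only [emdenFowlerDeriv, Function.comp_apply]
  ring

lemma hasDerivAt_emdenFowlerDeriv (hu : HasDerivAt u (u' (exp (-t))) (exp (-t)))
    (hu' : HasDerivAt u' (u'' (exp (-t))) (exp (-t))) :
    HasDerivAt (emdenFowlerDeriv α u u') (exp (-(α * t)) * (α ^ 2 * u (exp (-t))
      + (2 * α + 1) * exp (-t) * u' (exp (-t)) + exp (-t) ^ 2 * u'' (exp (-t)))) t := by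
  have hr : HasDerivAt (fun t => exp (-t)) (-exp (-t)) t := by
    simpa using hasDerivAt_exp_neg_mul 1 t
  have := ((hasDerivAt_exp_neg_mul α t).mul (((hu.comp t hr).const_mul α).add
    (hr.mul (hu'.comp t hr)))).neg
  refine this.congr_deriv ?_
  simp only [Pi.add_apply, Pi.mul_apply, Function.comp_apply]
  ring

lemma hasDerivAt_emdenFowlerDeriv_of_radialEq {n : ℕ} {s μ q α δ t : ℝ} {u : ℝ → ℝ}
    (hn : n ≠ 2) (hα : α = ((n : ℝ) - 2) / 2) (hδ : δ = n - α * (q + 1))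
    (hu : HasDerivAt u (deriv u (exp (-t))) (exp (-t)))
    (hu' : HasDerivAt (deriv u) (deriv (deriv u) (exp (-t))) (exp (-t)))
    (hpos : 0 < u (exp (-t))) (heq : radialEq n s μ q u (exp (-t))) :
    HasDerivAt (emdenFowlerDeriv α u (deriv u))
      (α ^ 2 * emdenFowler α u t - emdenFowler α u t ^ (twoStarS n s - 1)
        + μ * exp (-(δ * t)) * emdenFowler α u t ^ q) t := by
  refine (hasDerivAt_emdenFowlerDeriv hu hu').congr_deriv ?_
  have hn' : (n : ℝ) - 2 ≠ 0 := sub_ne_zero.2 (by exact_mod_cast hn)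
  set p := twoStarS n s
  have hαp : α * (p - 1) = α + 2 - s := by
    simp only [p, twoStarS, hα]
    field_simp
    ring
  set r := exp (-t) with hr
  have hr0 : r ≠ 0 := (exp_pos _).ne'
  have heq' : r ^ 2 * deriv (deriv u) r = -((n - 1) * r * deriv u r)
      - r ^ 2 * r ^ (-s) * u r ^ (p - 1) + μ * r ^ 2 * u r ^ q := by
    unfold radialEq at heq
    field_simp at heq
    linear_combination r * heq
  have hweight₁ : exp (-(α * t)) * r ^ 2 * r ^ (-s) = exp (-(α * t) * (p - 1)) := by
    rw [hr, ← exp_mul, sq, ← exp_add, ← exp_add, ← exp_add]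
    congr 1
    linear_combination t * hαp
  have hweight₂ : exp (-(α * t)) * r ^ 2 = exp (-(δ * t)) * exp (-(α * t) * q) := by
    rw [hr, sq, ← exp_add, ← exp_add, ← exp_add]
    congr 1
    rw [hδ, hα]
    ring
  simp only [emdenFowler]
  rw [mul_rpow (exp_pos _).le hpos.le, mul_rpow (exp_pos _).le hpos.le, ← exp_mul, ← exp_mul]
  linear_combination exp (-(α * t)) * heq' - u r ^ (p - 1) * hweight₁
    + μ * u r ^ q * hweight₂ + exp (-(α * t)) * r * deriv u r * (2 * hα)

end EmdenFowler

lemma exp_neg_mem_Ioo {R t : ℝ} (hR : 0 < R) (ht : -log R < t) : exp (-t) ∈ Ioo 0 R :=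
  ⟨exp_pos _, by simpa [exp_log hR] using exp_lt_exp.2 (neg_lt.1 ht)⟩

lemma tendsto_emdenFowler_nhdsGT_neg_log {α R : ℝ} {u : ℝ → ℝ} (hR : 0 < R)
    (hu : ContinuousWithinAt u (Ioc 0 R) R) (huR : u R = 0) :
    Tendsto (emdenFowler α u) (𝓝[>] (-log R)) (𝓝 0) := by
  have hr : Tendsto (fun t => exp (-t)) (𝓝[>] (-log R)) (𝓝[Ioc 0 R] R) := by
    refine tendsto_nhdsWithin_iff.2 ⟨?_, eventually_nhdsWithin_of_forall fun t ht =>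
      Ioo_subset_Ioc_self (exp_neg_mem_Ioo hR ht)⟩
    simpa [exp_log hR] using
      ((by fun_prop : Continuous fun t => exp (-t)).tendsto (-log R)).mono_left nhdsWithin_le_nhds
  have hweight :
      Tendsto (fun t => exp (-(α * t))) (𝓝[>] (-log R)) (𝓝 (exp (-(α * -log R)))) :=
    (by fun_prop : Continuous fun t => exp (-(α * t))).continuousWithinAt
  show Tendsto (fun t => exp (-(α * t)) * u (exp (-t))) _ _
  simpa [huR] using hweight.mul (hu.tendsto.comp hr)

lemma UpliBound.exists_eventually_emdenFowler_le {n : ℕ} {u : ℝ → ℝ} (hu : UpliBound n u) :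
    ∃ M, ∀ᶠ t in atTop, emdenFowler (((n : ℝ) - 2) / 2) u t ≤ M := by
  obtain ⟨C, hlt, hC⟩ := exists_between hu
  refine ⟨C.toReal, ?_⟩
  have hr : Tendsto (fun t => exp (-t)) atTop (𝓝[>] 0) :=
    tendsto_nhdsWithin_iff.2
      ⟨tendsto_exp_neg_atTop_nhds_zero, Eventually.of_forall fun _ => exp_pos _⟩
  filter_upwards [hr.eventually (eventually_lt_of_limsup_lt hlt)] with t ht
  rw [← exp_mul, neg_mul, mul_comm t] at ht
  exact (ENNReal.ofReal_le_iff_le_toReal hC.ne).1 ht.le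

lemma two_lt_twoStarS {n : ℕ} {s : ℝ} (hn : 2 < n) (hs : s < 2) : 2 < twoStarS n s := by
  have hn' : (2 : ℝ) < n := by exact_mod_cast hn
  rw [twoStarS, lt_div_iff₀ (by linarith)]
  linarith

lemma mul_add_one_lt_of_lt_twoStar_sub_one {n : ℕ} {q : ℝ} (hn : 2 < n)
    (hq : q < twoStar n - 1) : ((n : ℝ) - 2) / 2 * (q + 1) < n := by
  have hn' : (0 : ℝ) < n - 2 := by
    have : (2 : ℝ) < n := by exact_mod_cast hn
    linarith
  rw [twoStar, lt_sub_iff_add_lt, lt_div_iff₀ hn'] at hq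
  linarith

lemma ContDiffOn.hasDerivAt_deriv_deriv {u : ℝ → ℝ} {s : Set ℝ} {x : ℝ}
    (hu : ContDiffOn ℝ 2 u s) (hs : IsOpen s) (hx : x ∈ s) :
    HasDerivAt (deriv u) (deriv (deriv u) x) x :=
  (((hu.deriv_of_isOpen hs (by norm_num : (1 : WithTop ℕ∞) + 1 ≤ 2)).differentiableOn
    one_ne_zero).differentiableAt (hs.mem_nhds hx)).hasDerivAt

theorem stmt4_general (n : ℕ) (hn : 3 ≤ n) (s μ q : ℝ) (hs2 : s < 2)
    (hμ : 0 < μ) (hq1 : 1 < q) (hq2 : q < twoStar n - 1) (R : ℝ) (hR : 0 < R) :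
    ¬ ∃ u : ℝ → ℝ,
        ContDiffOn ℝ 2 u (Set.Ioc 0 R) ∧
        (∀ r ∈ Set.Ioo (0 : ℝ) R, 0 < u r) ∧
        u R = 0 ∧
        (∀ r ∈ Set.Ioo (0 : ℝ) R, radialEq n s μ q u r) ∧
        UpliBound n u := by
  rintro ⟨u, hu, hpos, huR, hode, hbdd⟩
  set α := ((n : ℝ) - 2) / 2
  set δ := (n : ℝ) - α * (q + 1)
  have hα : 0 < α := by
    have : (3 : ℝ) ≤ n := by exact_mod_cast hn
    exact div_pos (by linarith) two_pos
  have hp := two_lt_twoStarS (s := s) (by omega : 2 < n) hs2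
  have hδ : 0 < δ := sub_pos.2 (mul_add_one_lt_of_lt_twoStar_sub_one (by omega) hq2)
  have hr : ∀ t > -log R, exp (-t) ∈ Ioo 0 R := fun t => exp_neg_mem_Ioo hR
  have huo : ContDiffOn ℝ 2 u (Ioo 0 R) := hu.mono Ioo_subset_Ioc_self
  have hu₁ : ∀ t > -log R, HasDerivAt u (deriv u (exp (-t))) (exp (-t)) := fun t ht =>
    ((huo.differentiableOn two_ne_zero).differentiableAt (isOpen_Ioo.mem_nhds (hr t ht))).hasDerivAt
  have hu₂ : ∀ t > -log R, HasDerivAt (deriv u) (deriv (deriv u) (exp (-t))) (exp (-t)) :=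
    fun t ht => huo.hasDerivAt_deriv_deriv isOpen_Ioo (hr t ht)
  have hvpos : ∀ t > -log R, 0 < emdenFowler α u t :=
    fun t ht => mul_pos (exp_pos _) (hpos _ (hr t ht))
  have hv : ∀ t > -log R, HasDerivAt (emdenFowler α u) (emdenFowlerDeriv α u (deriv u) t) t :=
    fun t ht => hasDerivAt_emdenFowler (hu₁ t ht)
  have hv' := fun t (ht : t > -log R) => hasDerivAt_emdenFowlerDeriv_of_radialEq (by omega) rfl
    rfl (hu₁ t ht) (hu₂ t ht) (hpos _ (hr t ht)) (hode _ (hr t ht))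
  obtain ⟨e₀, he₀, hE⟩ := exists_pos_eventually_le_emdenFowlerEnergy (by linarith) hμ
    (by linarith) hδ hvpos hv hv'
    (tendsto_emdenFowler_nhdsGT_neg_log hR (hu.continuousOn _ ⟨hR, le_rfl⟩) huR)
  obtain ⟨M, hM⟩ := hbdd.exists_eventually_emdenFowler_le
  have hlarge := eventually_gt_atTop (-log R)
  exact not_eventually_pos_of_le_emdenFowlerEnergy hα.ne' hp hμ.le (by linarith) hδ he₀
    (hlarge.mono hv) (hlarge.mono hv') hM hE (hlarge.mono hvpos)

theorem stmt4 (n : ℕ) (hn : 3 ≤ n) (s μ q : ℝ) (hs0 : 0 < s) (hs2 : s < 2)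
    (hμ : 0 < μ) (hq1 : 1 < q) (hq2 : q < twoStar n - 1) (R : ℝ) (hR : 0 < R) :
    ¬ ∃ u : ℝ → ℝ,
        ContDiffOn ℝ 2 u (Set.Ioc 0 R) ∧
        (∀ r ∈ Set.Ioo (0 : ℝ) R, 0 < u r) ∧
        u R = 0 ∧
        (∀ r ∈ Set.Ioo (0 : ℝ) R, radialEq n s μ q u r) ∧
        UpliBound n u :=
  stmt4_general n hn s μ q hs2 hμ hq1 hq2 R hR
end
end

section
/- Let 1 < q < 2* − 1 and let u be a positive radial solution of (E) on (0,R̄) for some 0 < R̄ ≤ ∞, with limsup_{r→0⁺} r^{(n−2)/2} u(r) < ∞. Then for every r ∈ (0,R̄) the integral ∫₀^r ξ^{n−1} u(ξ)^{q+1} dξ is finite, and there exists a constant P ∈ ℝ such that for all r ∈ (0,R̄): z(r)²·F_r(z(r)) = P + (r·z'(r))² + 2·c_{μ,q,n}·∫₀^r ξ^{n−1} u(ξ)^{q+1} dξ, where z(r) := r^{(n−2)/2} u(r). -/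
open Filter Set Real MeasureTheory
open scoped Topology ENNReal

noncomputable section

/-- `λ = (n-2)(2* - 1 - q)/2`. -/
def lam (n : ℕ) (q : ℝ) : ℝ := ((n : ℝ) - 2) * (twoStar n - 1 - q) / 2

/-- `c_{μ,q,n} = λμ/(q+1)`. -/
def cμqn (n : ℕ) (μ q : ℝ) : ℝ := lam n q * μ / (q + 1)

/-- `F_R(ξ) = (n-2)²/4 - (2/2*(s)) ξ^{2*(s)-2} + (2μR^λ/(q+1)) ξ^{q-1}`. -/
def FR (n : ℕ) (s μ q R ξ : ℝ) : ℝ :=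
  ((n : ℝ) - 2) ^ 2 / 4 - (2 / twoStarS n s) * ξ ^ (twoStarS n s - 2)
    + (2 * μ * R ^ lam n q / (q + 1)) * ξ ^ (q - 1)

/-! The quantity `z² F_r(z) - (r z')²`, rewritten in terms of `u` (using `r^λ z^{q+1} = r^n u^{q+1}`
and `z^{2*(s)} = r^{n-s} u^{2*(s)}`), is the classical Pohozaev function of the radial equation.
Differentiating it and substituting `u''` from the equation, every term cancels except
`2 c_{μ,q,n} r^{n-1} u^{q+1}`, because `(n - s) / 2*(s) = (n - 2) / 2`. The bound `u ≤ C r^{-(n-2)/2}`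
near `0` makes `r^{n-1} u^{q+1}` integrable at `0` exactly when `q + 1 < 2*`, so the Pohozaev
function minus `2 c_{μ,q,n} ∫₀^r r^{n-1} u^{q+1}` has zero derivative on the interval, hence is
constant. -/

def pohozaev (n : ℕ) (s μ q : ℝ) (u : ℝ → ℝ) (r : ℝ) : ℝ :=
  2 * μ / (q + 1) * r ^ (n : ℝ) * u r ^ (q + 1)
    - 2 / twoStarS n s * r ^ ((n : ℝ) - s) * u r ^ twoStarS n s
    - ((n : ℝ) - 2) * r ^ ((n : ℝ) - 1) * u r * deriv u r - r ^ (n : ℝ) * deriv u r ^ 2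

theorem hasDerivAt_pohozaev {n : ℕ} {s μ q r : ℝ} {u : ℝ → ℝ} (hn : (n : ℝ) ≠ 2)
    (hs : s ≠ n) (hq : q + 1 ≠ 0) (hr : 0 < r) (hur : 0 < u r)
    (hu : HasDerivAt u (deriv u r) r) (hu' : HasDerivAt (deriv u) (deriv (deriv u) r) r)
    (heq : radialEq n s μ q u r) :
    HasDerivAt (pohozaev n s μ q u) (2 * cμqn n μ q * (r ^ ((n : ℝ) - 1) * u r ^ (q + 1))) r := by
  have hr0 : r ≠ 0 := hr.ne'
  have hpow (p : ℝ) : HasDerivAt (fun ρ : ℝ => ρ ^ p) (p * r ^ (p - 1)) r :=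
    Real.hasDerivAt_rpow_const (Or.inl hr0)
  have hupow (p : ℝ) : HasDerivAt (fun ρ => u ρ ^ p) (deriv u r * p * u r ^ (p - 1)) r :=
    hu.rpow_const (Or.inl hur.ne')
  have hderiv := (((((hpow n).const_mul (2 * μ / (q + 1))).mul (hupow (q + 1))).sub
    (((hpow (n - s)).const_mul (2 / twoStarS n s)).mul (hupow (twoStarS n s)))).sub
    ((((hpow (n - 1)).const_mul ((n : ℝ) - 2)).mul hu).mul hu')).sub
    ((hpow n).mul (hu'.pow 2))
  refine hderiv.congr_deriv ?_
  unfold radialEq at heq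
  have hσ : twoStarS n s = 2 * ((n : ℝ) - s) / ((n : ℝ) - 2) := rfl
  have hc : cμqn n μ q = ((n : ℝ) - 2) * (2 * n / ((n : ℝ) - 2) - 1 - q) / 2 * μ / (q + 1) := rfl
  have hu'' : deriv (deriv u) r = μ * u r ^ q - ((n : ℝ) - 1) / r * deriv u r
    - r ^ (-s) * u r ^ (twoStarS n s - 1) := by linarith
  simp only [Pi.mul_apply, Pi.pow_apply]
  rw [hu'', show q + 1 - 1 = q by ring, show (n : ℝ) - 1 - 1 = n - 2 by ring,
    Real.rpow_sub_one hr0, Real.rpow_sub_one hr0, Real.rpow_sub hr (n : ℝ) 2, Real.rpow_two,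
    Real.rpow_sub hr, Real.rpow_add_one hur.ne', Real.rpow_sub_one hur.ne', Real.rpow_neg hr.le]
  -- keeps the exponent `2*(s)` of `u r` out of reach of the `rw [hσ]` below
  generalize u r ^ twoStarS n s = B
  have hn2 : (n : ℝ) - 2 ≠ 0 := sub_ne_zero.2 hn
  have hns : (n : ℝ) - s ≠ 0 := sub_ne_zero.2 (Ne.symm hs)
  rw [hσ, hc]
  field_simp
  ring

theorem sq_mul_FR_eq_pohozaev_add {n : ℕ} {s μ q r : ℝ} {u : ℝ → ℝ} (hn : (n : ℝ) ≠ 2)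
    (hr : 0 < r) (hur : 0 < u r) (hu : HasDerivAt u (deriv u r) r) :
    (r ^ (((n : ℝ) - 2) / 2) * u r) ^ 2 * FR n s μ q r (r ^ (((n : ℝ) - 2) / 2) * u r)
      = pohozaev n s μ q u r + (r * deriv (fun ρ : ℝ => ρ ^ (((n : ℝ) - 2) / 2) * u ρ) r) ^ 2 := by
  set α : ℝ := ((n : ℝ) - 2) / 2 with hα
  set σ := twoStarS n s with hσ
  have hn2 : (n : ℝ) - 2 ≠ 0 := sub_ne_zero.2 hn
  have hz : 0 < r ^ α * u r := by positivity
  have hrz : r * deriv (fun ρ : ℝ => ρ ^ α * u ρ) r = r ^ α * (α * u r + r * deriv u r) := by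
    have hd : HasDerivAt (fun ρ : ℝ => ρ ^ α * u ρ) (α * r ^ (α - 1) * u r + r ^ α * deriv u r) r :=
      (Real.hasDerivAt_rpow_const (Or.inl hr.ne')).mul hu
    rw [hd.deriv, Real.rpow_sub_one hr.ne']
    field_simp
  have hpow_sq : (r ^ α) ^ 2 = r ^ ((n : ℝ) - 2) := by
    rw [← Real.rpow_mul_natCast hr.le]; congr 1; rw [hα]; push_cast; ring
  have hrn : r ^ (n : ℝ) = (r ^ α) ^ 2 * r ^ 2 := by
    rw [hpow_sq, ← Real.rpow_natCast r 2, ← Real.rpow_add hr]; push_cast; ring_nf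
  have hrn1 : r ^ ((n : ℝ) - 1) = (r ^ α) ^ 2 * r := by
    rw [hpow_sq, ← Real.rpow_add_one hr.ne']; ring_nf
  have hzpow (p : ℝ) : (r ^ α * u r) ^ 2 * (r ^ α * u r) ^ (p - 2) = r ^ (α * p) * u r ^ p := by
    rw [← Real.rpow_natCast, ← Real.rpow_add hz, Real.mul_rpow (by positivity) hur.le,
      ← Real.rpow_mul hr.le]
    push_cast; ring_nf
  have hzσ : (r ^ α * u r) ^ 2 * (r ^ α * u r) ^ (σ - 2) = r ^ ((n : ℝ) - s) * u r ^ σ := by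
    rw [hzpow, hα, hσ, twoStarS]; congr 2; field_simp
  have hzq : r ^ lam n q * ((r ^ α * u r) ^ 2 * (r ^ α * u r) ^ (q - 1))
      = r ^ (n : ℝ) * u r ^ (q + 1) := by
    rw [show q - 1 = q + 1 - 2 by ring, hzpow, ← mul_assoc, ← Real.rpow_add hr, lam, twoStar, hα]
    congr 2; field_simp; ring
  rw [hrz]
  unfold FR pohozaev
  rw [← hσ]
  linear_combination (-(2 / σ)) * hzσ + (2 * μ / (q + 1)) * hzq
    + (((n : ℝ) - 2) * u r * deriv u r) * hrn1 + deriv u r ^ 2 * hrn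

theorem Filter.exists_eventually_le_of_limsup_ofReal_lt_top {α : Type*} {l : Filter α}
    {g : α → ℝ} (h : limsup (fun x => ENNReal.ofReal (g x)) l < ⊤) :
    ∃ C, ∀ᶠ x in l, g x ≤ C := by
  set K := limsup (fun x => ENNReal.ofReal (g x)) l
  have hK1 : K + 1 ≠ ⊤ := ENNReal.add_ne_top.2 ⟨h.ne, ENNReal.one_ne_top⟩
  refine ⟨(K + 1).toReal, (eventually_lt_of_limsup_lt (ENNReal.lt_add_right h.ne one_ne_zero)).mono
    fun x hx => ?_⟩
  exact (ENNReal.ofReal_le_iff_le_toReal hK1).1 hx.le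

theorem norm_rpow_mul_rpow_le {x a C α k p : ℝ} (hx : 0 < x) (ha : 0 ≤ a) (hp : 0 ≤ p)
    (h : x ^ α * a ≤ C) : ‖x ^ k * a ^ p‖ ≤ C ^ p * x ^ (k - α * p) := by
  rw [Real.norm_of_nonneg (by positivity)]
  calc x ^ k * a ^ p = x ^ (k - α * p) * (x ^ α * a) ^ p := by
        rw [Real.mul_rpow (by positivity) ha, ← Real.rpow_mul hx.le, ← mul_assoc,
          ← Real.rpow_add hx, sub_add_cancel]
    _ ≤ x ^ (k - α * p) * C ^ p := by gcongr
    _ = C ^ p * x ^ (k - α * p) := mul_comm _ _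

theorem integrableOn_Ioo_of_eventually_norm_le_mul_rpow {f : ℝ → ℝ} {r C w : ℝ} (hw : -1 < w)
    (hf : ContinuousOn f (Ioc 0 r)) (hbound : ∀ᶠ x in 𝓝[>] 0, ‖f x‖ ≤ C * x ^ w) :
    IntegrableOn f (Ioo 0 r) := by
  rcases le_or_gt r 0 with hr | hr
  · simp [Ioo_eq_empty (not_lt.2 hr)]
  obtain ⟨ε, hε, hεbound⟩ := mem_nhdsGT_iff_exists_Ioo_subset.1 hbound
  set m := min ε r
  have hm : 0 < m := lt_min hε hr
  have hIoo_sub : Ioo 0 m ⊆ Ioc 0 r := fun x hx => ⟨hx.1, (hx.2.trans_le (min_le_right _ _)).le⟩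
  have hnear : IntegrableOn f (Ioo 0 m) := by
    have hrpow : IntegrableOn (fun x : ℝ => C * x ^ w) (Ioo 0 m) :=
      ((intervalIntegrable_iff_integrableOn_Ioo_of_le hm.le).1
        (intervalIntegral.intervalIntegrable_rpow' hw)).const_mul C
    refine hrpow.mono' ((hf.mono hIoo_sub).aestronglyMeasurable measurableSet_Ioo) ?_
    exact (ae_restrict_iff' measurableSet_Ioo).2 <| Eventually.of_forall fun x hx =>
      hεbound ⟨hx.1, hx.2.trans_le (min_le_left _ _)⟩
  have hfar : IntegrableOn f (Icc m r) :=
    (hf.mono fun x hx => ⟨hm.trans_le hx.1, hx.2⟩).integrableOn_compact isCompact_Icc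
  refine (hnear.union hfar).mono_set fun x hx => ?_
  rcases lt_or_ge x m with hxm | hxm
  · exact Or.inl ⟨hx.1, hxm⟩
  · exact Or.inr ⟨hxm, hx.2.le⟩

theorem integrableOn_rpow_mul_rpow_of_upliBound {n : ℕ} {q r : ℝ} {u : ℝ → ℝ}
    (hn : 2 < (n : ℝ)) (hq : 0 ≤ q + 1) (hq' : q + 1 < twoStar n) (hr : 0 < r)
    (hu : ContinuousOn u (Ioc 0 r)) (hpos : ∀ x ∈ Ioc 0 r, 0 ≤ u x) (hbd : UpliBound n u) :
    IntegrableOn (fun ξ : ℝ => ξ ^ ((n : ℝ) - 1) * u ξ ^ (q + 1)) (Ioo 0 r) := by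
  obtain ⟨C, hC⟩ := exists_eventually_le_of_limsup_ofReal_lt_top hbd
  have hw : -1 < (n : ℝ) - 1 - ((n : ℝ) - 2) / 2 * (q + 1) := by
    have : ((n : ℝ) - 2) * (q + 1) < 2 * n := by
      rw [twoStar, lt_div_iff₀ (by linarith)] at hq'; linarith
    linarith
  refine integrableOn_Ioo_of_eventually_norm_le_mul_rpow (C := C ^ (q + 1)) hw ?_ ?_
  · exact (continuousOn_id.rpow_const fun x hx => Or.inl hx.1.ne').mul
      (hu.rpow_const fun _ _ => Or.inr hq)
  · filter_upwards [hC, Ioo_mem_nhdsGT hr] with x hxC hx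
    exact norm_rpow_mul_rpow_le hx.1 (hpos x ⟨hx.1, hx.2.le⟩) hq hxC

theorem IsRadialSol.exists_pohozaev_eq {n : ℕ} {s μ q : ℝ} {I : Set ℝ} {u : ℝ → ℝ}
    (hn : (n : ℝ) ≠ 2) (hs : s ≠ n) (hq : q + 1 ≠ 0) (hu : IsRadialSol n s μ q I u)
    (hIo : IsOpen I) (hIc : IsPreconnected I) (hI0 : I ⊆ Ioi 0)
    (hint : ∀ r ∈ I, IntegrableOn (fun ξ : ℝ => ξ ^ ((n : ℝ) - 1) * u ξ ^ (q + 1)) (Ioo 0 r)) :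
    ∃ P, ∀ r ∈ I, pohozaev n s μ q u r
      = P + 2 * cμqn n μ q * ∫ ξ in Ioo 0 r, ξ ^ ((n : ℝ) - 1) * u ξ ^ (q + 1) := by
  obtain ⟨hreg, hpos, heq⟩ := hu
  set f := fun ξ : ℝ => ξ ^ ((n : ℝ) - 1) * u ξ ^ (q + 1)
  have hf : ContinuousOn f I :=
    (continuousOn_id.rpow_const fun x hx => Or.inl (hI0 hx).ne').mul
      (hreg.continuousOn.rpow_const fun x hx => Or.inl (hpos x hx).ne')
  have hu' : ContDiffOn ℝ 1 (deriv u) I := hreg.deriv_of_isOpen hIo (by norm_num)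
  have hpoh : ∀ r ∈ I, HasDerivAt (pohozaev n s μ q u) (2 * cμqn n μ q * f r) r := fun r hr =>
    hasDerivAt_pohozaev hn hs hq (hI0 hr) (hpos r hr)
      ((hreg.differentiableOn (by norm_num)).differentiableAt (hIo.mem_nhds hr)).hasDerivAt
      ((hu'.differentiableOn one_ne_zero).differentiableAt (hIo.mem_nhds hr)).hasDerivAt (heq r hr)
  have hprim : ∀ r ∈ I, HasDerivAt (fun ρ => 2 * cμqn n μ q * ∫ ξ in (0 : ℝ)..ρ, f ξ)
      (2 * cμqn n μ q * f r) r := fun r hr =>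
    (intervalIntegral.integral_hasDerivAt_right
      ((intervalIntegrable_iff_integrableOn_Ioo_of_le (hI0 hr).le).2 (hint r hr))
      (hf.stronglyMeasurableAtFilter hIo r hr) (hf.continuousAt (hIo.mem_nhds hr))).const_mul _
  obtain ⟨P, hP⟩ := hIo.exists_eq_add_of_deriv_eq hIc
    (fun r hr => (hpoh r hr).differentiableAt.differentiableWithinAt)
    (fun r hr => (hprim r hr).differentiableAt.differentiableWithinAt)
    (fun r hr => (hpoh r hr).deriv.trans (hprim r hr).deriv.symm)
  refine ⟨P, fun r hr => ?_⟩
  rw [hP hr, add_comm]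
  dsimp only
  rw [intervalIntegral.integral_of_le (hI0 hr).le, integral_Ioc_eq_integral_Ioo]

theorem stmt5_general (n : ℕ) (hn : 3 ≤ n) (s μ q : ℝ) (hs2 : s < 2)
    (hq1 : 1 < q) (hq2 : q < twoStar n - 1)
    (Rbar : ℝ≥0∞) (u : ℝ → ℝ)
    (hu : IsRadialSol n s μ q {r : ℝ | 0 < r ∧ ENNReal.ofReal r < Rbar} u)
    (hbd : UpliBound n u) :
    (∀ r : ℝ, 0 < r → ENNReal.ofReal r < Rbar →
      IntegrableOn (fun ξ : ℝ => ξ ^ ((n : ℝ) - 1) * u ξ ^ (q + 1)) (Set.Ioo 0 r)) ∧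
    ∃ P : ℝ, ∀ r : ℝ, 0 < r → ENNReal.ofReal r < Rbar →
      (r ^ (((n : ℝ) - 2) / 2) * u r) ^ 2 * FR n s μ q r (r ^ (((n : ℝ) - 2) / 2) * u r)
        = P + (r * deriv (fun ρ : ℝ => ρ ^ (((n : ℝ) - 2) / 2) * u ρ) r) ^ 2
          + 2 * cμqn n μ q * ∫ ξ in Set.Ioo (0 : ℝ) r, ξ ^ ((n : ℝ) - 1) * u ξ ^ (q + 1) := by
  set I := {r : ℝ | 0 < r ∧ ENNReal.ofReal r < Rbar}
  have hn2 : (2 : ℝ) < n := by exact_mod_cast hn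
  have hIo : IsOpen I := isOpen_Ioi.inter (isOpen_Iio.preimage ENNReal.continuous_ofReal)
  have hIoc : ∀ r ∈ I, Ioc 0 r ⊆ I := fun r hr x hx =>
    ⟨hx.1, (ENNReal.ofReal_le_ofReal hx.2).trans_lt hr.2⟩
  have hIc : IsPreconnected I :=
    OrdConnected.isPreconnected ⟨fun x hx y hy z hz => hIoc y hy ⟨hx.1.trans_le hz.1, hz.2⟩⟩
  have hint (r : ℝ) (hr : r ∈ I) :
      IntegrableOn (fun ξ : ℝ => ξ ^ ((n : ℝ) - 1) * u ξ ^ (q + 1)) (Ioo 0 r) :=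
    integrableOn_rpow_mul_rpow_of_upliBound hn2 (by linarith) (by linarith) hr.1
      (hu.1.continuousOn.mono (hIoc r hr)) (fun x hx => (hu.2.1 x (hIoc r hr hx)).le) hbd
  obtain ⟨P, hP⟩ := hu.exists_pohozaev_eq hn2.ne' (by linarith) (by linarith) hIo hIc
    (fun r hr => hr.1) hint
  refine ⟨fun r h0 hR => hint r ⟨h0, hR⟩, P, fun r h0 hR => ?_⟩
  have hd : HasDerivAt u (deriv u r) r := ((hu.1.differentiableOn (by norm_num)).differentiableAt
    (hIo.mem_nhds ⟨h0, hR⟩)).hasDerivAt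
  rw [sq_mul_FR_eq_pohozaev_add hn2.ne' h0 (hu.2.1 r ⟨h0, hR⟩) hd, hP r ⟨h0, hR⟩]
  ring

theorem stmt5 (n : ℕ) (hn : 3 ≤ n) (s μ q : ℝ) (hs0 : 0 < s) (hs2 : s < 2)
    (hμ : 0 < μ) (hq1 : 1 < q) (hq2 : q < twoStar n - 1)
    (Rbar : ℝ≥0∞) (hRbar : 0 < Rbar) (u : ℝ → ℝ)
    (hu : IsRadialSol n s μ q {r : ℝ | 0 < r ∧ ENNReal.ofReal r < Rbar} u)
    (hbd : UpliBound n u) :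
    (∀ r : ℝ, 0 < r → ENNReal.ofReal r < Rbar →
      IntegrableOn (fun ξ : ℝ => ξ ^ ((n : ℝ) - 1) * u ξ ^ (q + 1)) (Set.Ioo 0 r)) ∧
    ∃ P : ℝ, ∀ r : ℝ, 0 < r → ENNReal.ofReal r < Rbar →
      (r ^ (((n : ℝ) - 2) / 2) * u r) ^ 2 * FR n s μ q r (r ^ (((n : ℝ) - 2) / 2) * u r)
        = P + (r * deriv (fun ρ : ℝ => ρ ^ (((n : ℝ) - 2) / 2) * u ρ) r) ^ 2
          + 2 * cμqn n μ q * ∫ ξ in Set.Ioo (0 : ℝ) r, ξ ^ ((n : ℝ) - 1) * u ξ ^ (q + 1) :=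
  stmt5_general n hn s μ q hs2 hq1 hq2 Rbar u hu hbd
end
end

section
/- Under the hypotheses on δ, h₁, h₂, h₃, C₁, p, a > 0, c < 0 as in the center-stable manifold theorem, let C₂ > 0 and let r₀ ∈ (0, δ/2) satisfy 4C₁(1 + C₂²)r₀ ≤ |c|. Let w : [0,r₀] × [−r₀,r₀] → [−r₀,r₀] be a C₂-Lipschitz continuous function with w(0,0) = 0. Then for every (y₀,z₀) ∈ [0,r₀] × [−r₀,r₀], the initial value problem y' = h₂(w(y,z), y, z), z' = cz + h₃(w(y,z), y, z), (y(0),z(0)) = (y₀,z₀), has a solution defined on all of [0,∞) which satisfies 0 ≤ y(t) ≤ y₀ and |z(t)| ≤ max{y₀, |z₀|} for all t ≥ 0, and (y(t), z(t)) → (0,0) as t → ∞. -/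
open Filter Set Real MeasureTheory
open scoped Topology

noncomputable section

/-- The open Euclidean ball of radius `δ` centred at the origin in `ℝ³ = ℝ × ℝ × ℝ`. -/
def ball3 (δ : ℝ) : Set (ℝ × ℝ × ℝ) :=
  {ξ | ξ.1 ^ 2 + ξ.2.1 ^ 2 + ξ.2.2 ^ 2 < δ ^ 2}

/-- The Euclidean norm of the gradient of `h : ℝ³ → ℝ` at `ξ`. -/
def gradNorm (h : ℝ × ℝ × ℝ → ℝ) (ξ : ℝ × ℝ × ℝ) : ℝ :=
  Real.sqrt ((fderiv ℝ h ξ (1, 0, 0)) ^ 2 + (fderiv ℝ h ξ (0, 1, 0)) ^ 2 +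
    (fderiv ℝ h ξ (0, 0, 1)) ^ 2)

/-- The hypotheses of the center-stable manifold theorem on `h₁, h₂, h₃`. -/
def CSHyp (δ : ℝ) (h₁ h₂ h₃ : ℝ × ℝ × ℝ → ℝ) (C₁ p : ℝ) : Prop :=
  ContDiffOn ℝ 1 h₁ (ball3 δ) ∧ ContDiffOn ℝ 1 h₂ (ball3 δ) ∧ ContDiffOn ℝ 1 h₃ (ball3 δ) ∧
  (∀ ξ ∈ ball3 δ, |h₁ ξ| + |h₂ ξ| + |h₃ ξ| ≤ C₁ * (ξ.1 ^ 2 + ξ.2.1 ^ 2 + ξ.2.2 ^ 2)) ∧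
  (∀ ξ ∈ ball3 δ,
    gradNorm h₁ ξ + gradNorm h₂ ξ + gradNorm h₃ ξ ≤ C₁ * (|ξ.1| + |ξ.2.1| + |ξ.2.2|)) ∧
  (∀ ξ ∈ ball3 δ, h₂ ξ ≤ -C₁ * |ξ.2.1| ^ p) ∧
  (∀ x z : ℝ, (x, (0 : ℝ), z) ∈ ball3 δ → h₂ (x, 0, z) = 0)

/-- The rectangle `[0, r₀] × [-r₀, r₀]`. -/
def rect (r₀ : ℝ) : Set (ℝ × ℝ) := Set.Icc (0 : ℝ) r₀ ×ˢ Set.Icc (-r₀) r₀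

/-!
Clamping the vector field to the rectangle `[0, r₀] × [-r₀, r₀]` makes it globally Lipschitz and
bounded, so Picard–Lindelöf gives a global solution. On the rectangle `y' = h₂ ≤ 0`, with `y' = 0`
on `y = 0`, and the smallness condition `4 C₁ (1 + C₂²) r₀ ≤ |c|` gives
`|h₃| ≤ |c| (y + |z|) / 4`, so the linear term `c z` dominates as long as `y ≤ |z|`. Barrier
arguments then keep `0 ≤ y ≤ y₀` and `|z| ≤ max y₀ |z₀|`, hence the clamped solution solves the
original system. Finally `y' ≤ -C₁ y ^ p` drives `y` to `0`, after which `(z²)' ≤ c z²` drives `z`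
to `0`.
-/

open Metric
open scoped NNReal

section GlobalExistence

variable {E : Type*} [NormedAddCommGroup E] [NormedSpace ℝ E] [CompleteSpace E]

theorem exists_isIntegralCurve_of_lipschitzWith {F : E → E} {K : ℝ≥0} (hF : LipschitzWith K F)
    (hb : Bornology.IsBounded (range F)) (x₀ : E) :
    ∃ γ : ℝ → E, γ 0 = x₀ ∧ IsIntegralCurve γ (fun _ ↦ F) := by
  obtain ⟨L, hL⟩ := isBounded_iff_forall_norm_le.mp hb
  have hlocal : ∀ T : ℝ, ∃ α : ℝ → E, α 0 = x₀ ∧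
      ∀ t ∈ Ioo (-T) T, HasDerivAt α (F (α t)) t := by
    intro T
    have hPL : IsPicardLindelof (fun _ ↦ F) (tmin := -|T|) (tmax := |T|) ⟨0, by simp⟩ x₀
        (L.toNNReal * |T|.toNNReal) 0 L.toNNReal K :=
      .of_time_independent (fun x _ ↦ (hL _ (mem_range_self x)).trans (Real.le_coe_toNNReal L))
        hF.lipschitzOnWith (by simp)
    obtain ⟨α, hα0, hα⟩ := hPL.exists_eq_forall_mem_Icc_hasDerivWithinAt₀
    refine ⟨α, hα0, fun t ht ↦ (hα t ⟨?_, ?_⟩).hasDerivAt (Icc_mem_nhds ?_ ?_)⟩ <;>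
      cases abs_cases T <;> linarith [ht.1, ht.2]
  choose α hα0 hα using hlocal
  -- by uniqueness, local solutions agree on common intervals and so glue to a global one
  have hagree : ∀ T T' : ℝ, 0 < T → 0 < T' → EqOn (α T) (α T') (Ioo (-min T T') (min T T')) :=
    fun T T' hT hT' ↦ ODE_solution_unique_of_mem_Ioo (v := fun _ ↦ F) (s := fun _ ↦ univ)
      (fun _ _ ↦ hF.lipschitzOnWith) (by simp [hT, hT'])
      (fun t ht ↦ ⟨hα T t ⟨(neg_le_neg (min_le_left _ _)).trans_lt ht.1,
        ht.2.trans_le (min_le_left _ _)⟩, trivial⟩)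
      (fun t ht ↦ ⟨hα T' t ⟨(neg_le_neg (min_le_right _ _)).trans_lt ht.1,
        ht.2.trans_le (min_le_right _ _)⟩, trivial⟩)
      ((hα0 T).trans (hα0 T').symm)
  refine ⟨fun t ↦ α (|t| + 1) t, hα0 _, fun t ↦ ?_⟩
  have hT : 0 < |t| + 1 := by positivity
  have ht : t ∈ Ioo (-(|t| + 1)) (|t| + 1) := abs_lt.mp (lt_add_one _)
  refine (hα _ t ht).congr_of_eventuallyEq ?_
  filter_upwards [isOpen_Ioo.mem_nhds ht] with s hs
  have hs' : |s| < |t| + 1 := abs_lt.mpr hs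
  exact hagree _ _ (by positivity) hT (abs_lt.mp (lt_min (lt_add_one _) hs'))

end GlobalExistence

section RectProjection

variable {r : ℝ}

def rectProj (r : ℝ) (q : ℝ × ℝ) : ℝ × ℝ :=
  (max 0 (min q.1 r), max (-r) (min q.2 r))

lemma rectProj_mem (hr : 0 ≤ r) (q : ℝ × ℝ) : rectProj r q ∈ rect r :=
  ⟨⟨le_max_left _ _, max_le hr (min_le_right _ _)⟩,
    le_max_left _ _, max_le (by linarith) (min_le_right _ _)⟩

lemma rectProj_of_mem {q : ℝ × ℝ} (hq : q ∈ rect r) : rectProj r q = q := by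
  obtain ⟨⟨h₁, h₂⟩, h₃, h₄⟩ := hq
  simp [rectProj, h₁, h₂, h₃, h₄]

lemma lipschitzWith_rectProj (r : ℝ) : LipschitzWith 1 (rectProj r) := by
  have h := ((LipschitzWith.prod_fst.min_const r).const_max 0).prodMk
    ((LipschitzWith.prod_snd.min_const r).const_max (-r))
  rwa [max_self] at h

lemma isCompact_rect (r : ℝ) : IsCompact (rect r) :=
  isCompact_Icc.prod isCompact_Icc

theorem exists_isIntegralCurve_comp_rectProj {G : ℝ × ℝ → ℝ × ℝ} {K : ℝ≥0} (hr : 0 ≤ r)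
    (hG : LipschitzOnWith K G (rect r)) (x₀ : ℝ × ℝ) :
    ∃ γ : ℝ → ℝ × ℝ, γ 0 = x₀ ∧ IsIntegralCurve γ (fun _ ↦ G ∘ rectProj r) := by
  refine exists_isIntegralCurve_of_lipschitzWith (K := K * 1) ?_ ?_ x₀
  · exact lipschitzOnWith_univ.mp <|
      hG.comp (lipschitzWith_rectProj r).lipschitzOnWith fun q _ ↦ rectProj_mem hr q
  · refine ((isCompact_rect r).image_of_continuousOn hG.continuousOn).isBounded.subset ?_
    rintro _ ⟨q, rfl⟩
    exact mem_image_of_mem G (rectProj_mem hr q)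

end RectProjection

section Comparison

variable {u u' : ℝ → ℝ} {t₀ b : ℝ}

theorem le_of_hasDerivAt_nonpos_on_superlevel (hu : ∀ t ≥ t₀, HasDerivAt u (u' t) t)
    (h₀ : u t₀ ≤ b) (hneg : ∀ t ≥ t₀, b ≤ u t → u' t ≤ 0) : ∀ t ≥ t₀, u t ≤ b := by
  intro t ht
  -- `u` cannot cross a line `b + ε (s - t₀)`, since `u' ≤ 0 < ε` at a crossing point
  have hfence : ∀ ε > 0, u t ≤ b + ε * (t - t₀) := by
    intro ε hε
    refine image_le_of_deriv_right_lt_deriv_boundary (f' := u')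
      (B := fun s ↦ b + ε * (s - t₀)) (B' := fun _ ↦ ε)
      (HasDerivAt.continuousOn fun s hs ↦ hu s hs.1) (fun s hs ↦ (hu s hs.1).hasDerivWithinAt)
      (by simpa using h₀) (fun s ↦ ?_) (fun s hs hus ↦ ?_) ⟨ht, le_rfl⟩
    · simpa using (((hasDerivAt_id s).sub_const t₀).const_mul ε).const_add b
    · have hb : b ≤ u s := hus ▸ le_add_of_nonneg_right (mul_nonneg hε.le (sub_nonneg.2 hs.1))
      exact (hneg s hs.1 hb).trans_lt hε
  have hlim : Tendsto (fun ε ↦ b + ε * (t - t₀)) (𝓝[>] 0) (𝓝 b) :=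
    ((by fun_prop : Continuous fun ε : ℝ ↦ b + ε * (t - t₀)).tendsto' 0 b (by simp)).mono_left
      nhdsWithin_le_nhds
  exact le_of_tendsto_of_tendsto tendsto_const_nhds hlim (eventually_nhdsWithin_of_forall hfence)

theorem tendsto_zero_of_hasDerivAt_le_neg (hu : ∀ t ≥ t₀, HasDerivAt u (u' t) t)
    (hnonneg : ∀ t ≥ t₀, 0 ≤ u t)
    (hdecr : ∀ ε > 0, ∃ κ > 0, ∀ᶠ t in atTop, ε ≤ u t → u' t ≤ -κ) :
    Tendsto u atTop (𝓝 0) := by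
  have hsmall : ∀ ε > 0, ∀ᶠ t in atTop, u t ≤ ε := by
    intro ε hε
    obtain ⟨κ, hκ, hev⟩ := hdecr ε hε
    obtain ⟨T, hT⟩ := eventually_atTop.mp hev
    set T₁ := max T t₀
    -- above level `ε` the function `u` decreases at rate `κ`, so it cannot stay there
    obtain ⟨t₁, ht₁, hut₁⟩ : ∃ t₁ ≥ T₁, u t₁ ≤ ε := by
      by_contra! habove
      have hline : ∀ t ≥ T₁, u t + κ * (t - T₁) ≤ u T₁ := by
        refine le_of_hasDerivAt_nonpos_on_superlevel
          (fun t ht ↦ (hu t (le_of_max_le_right ht)).add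
            (((hasDerivAt_id t).sub_const T₁).const_mul κ)) (by simp) fun t ht _ ↦ ?_
        linarith [hT t (le_of_max_le_left ht) (habove t ht).le]
      have ht : T₁ ≤ T₁ + (u T₁ + 1) / κ := by
        linarith [div_nonneg (by linarith [hnonneg T₁ (le_max_right _ _)] : 0 ≤ u T₁ + 1) hκ.le]
      have := hline _ ht
      rw [add_sub_cancel_left, mul_div_cancel₀ _ hκ.ne'] at this
      linarith [hnonneg _ ((le_max_right T t₀).trans ht)]
    filter_upwards [eventually_ge_atTop t₁] with t ht
    exact le_of_hasDerivAt_nonpos_on_superlevel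
      (fun s hs ↦ hu s ((le_max_right T t₀).trans (ht₁.trans hs))) hut₁
      (fun s hs hεs ↦ (hT s (le_of_max_le_left (ht₁.trans hs)) hεs).trans (by linarith)) t ht
  refine tendsto_order.2 ⟨fun a ha ↦ ?_, fun a ha ↦ ?_⟩
  · filter_upwards [eventually_ge_atTop t₀] with t ht using ha.trans_le (hnonneg t ht)
  · filter_upwards [hsmall (a / 2) (by linarith)] with t ht using by linarith

end Comparison

section ProdDeriv

variable {𝕜 E F : Type*} [NontriviallyNormedField 𝕜] [NormedAddCommGroup E] [NormedSpace 𝕜 E]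
  [NormedAddCommGroup F] [NormedSpace 𝕜 F] {f : 𝕜 → E × F} {f' : E × F} {x : 𝕜}

theorem HasDerivAt.fst (h : HasDerivAt f f' x) : HasDerivAt (fun t ↦ (f t).1) f'.1 x :=
  (hasFDerivAt_fst (𝕜 := 𝕜) (p := f x)).comp_hasDerivAt x h

theorem HasDerivAt.snd (h : HasDerivAt f f' x) : HasDerivAt (fun t ↦ (f t).2) f'.2 x :=
  (hasFDerivAt_snd (𝕜 := 𝕜) (p := f x)).comp_hasDerivAt x h

end ProdDeriv

section Trapping

variable {G : ℝ × ℝ → ℝ × ℝ} {r c : ℝ} {γ : ℝ → ℝ × ℝ}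

theorem IsIntegralCurve.bounds_of_comp_rectProj (hr : 0 ≤ r) (hc : c < 0)
    (hG₁ : ∀ u ∈ rect r, (G u).1 ≤ 0) (hG₁₀ : ∀ u ∈ rect r, u.1 = 0 → (G u).1 = 0)
    (hG₂ : ∀ u ∈ rect r, u.1 ≤ |u.2| → |(G u).2 - c * u.2| ≤ |c| / 2 * |u.2|)
    (hγ : IsIntegralCurve γ (fun _ ↦ G ∘ rectProj r)) (hγ₀ : γ 0 ∈ rect r) :
    ∀ t ≥ 0, 0 ≤ (γ t).1 ∧ (γ t).1 ≤ (γ 0).1 ∧ |(γ t).2| ≤ max (γ 0).1 |(γ 0).2| := by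
  obtain ⟨⟨hy₀, hy₀r⟩, hz₀l, hz₀r⟩ := hγ₀
  have hy : ∀ t, HasDerivAt (fun s ↦ (γ s).1) (G (rectProj r (γ t))).1 t := fun t ↦ (hγ t).fst
  have hz : ∀ t, HasDerivAt (fun s ↦ (γ s).2) (G (rectProj r (γ t))).2 t := fun t ↦ (hγ t).snd
  set M := max (γ 0).1 |(γ 0).2|
  have hMr : M ≤ r := max_le hy₀r (abs_le.mpr ⟨hz₀l, hz₀r⟩)
  have hle : ∀ t ≥ 0, (γ t).1 ≤ (γ 0).1 :=
    le_of_hasDerivAt_nonpos_on_superlevel (fun t _ ↦ hy t) le_rfl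
      fun t _ _ ↦ hG₁ _ (rectProj_mem hr _)
  have hge : ∀ t ≥ 0, -(γ t).1 ≤ 0 :=
    le_of_hasDerivAt_nonpos_on_superlevel (fun t _ ↦ (hy t).neg) (neg_nonpos.mpr hy₀)
      fun t _ ht ↦ by
        rw [hG₁₀ _ (rectProj_mem hr _) (max_eq_left ((min_le_left _ _).trans (neg_nonneg.mp ht))),
          neg_zero]
  have hproj₁ : ∀ t ≥ 0, (rectProj r (γ t)).1 ≤ M := fun t ht ↦
    max_le (hy₀.trans (le_max_left _ _))
      ((min_le_left _ _).trans ((hle t ht).trans (le_max_left _ _)))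
  have hzle : ∀ t ≥ 0, (γ t).2 ≤ M :=
    le_of_hasDerivAt_nonpos_on_superlevel (fun t _ ↦ hz t) (le_max_of_le_right (le_abs_self _))
      fun t ht hMz ↦ by
        set u := rectProj r (γ t)
        have hu₂ : M ≤ u.2 := le_max_of_le_right (le_min hMz hMr)
        have hu₂0 : 0 ≤ u.2 := (abs_nonneg _).trans ((le_max_right _ _).trans hu₂)
        have h := hG₂ u (rectProj_mem hr _)
          (by rw [abs_of_nonneg hu₂0]; exact (hproj₁ t ht).trans hu₂)
        rw [abs_of_nonneg hu₂0, abs_of_neg hc] at h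
        linarith [(abs_le.mp h).2, mul_nonneg (neg_nonneg.mpr hc.le) hu₂0]
  have hzge : ∀ t ≥ 0, -(γ t).2 ≤ M :=
    le_of_hasDerivAt_nonpos_on_superlevel (fun t _ ↦ (hz t).neg) (le_max_of_le_right (neg_le_abs _))
      fun t ht hMz ↦ by
        set u := rectProj r (γ t)
        have hu₂ : u.2 ≤ -M := max_le (neg_le_neg hMr) ((min_le_left _ _).trans (by linarith))
        have hu₂0 : u.2 ≤ 0 :=
          hu₂.trans (neg_nonpos.mpr ((abs_nonneg _).trans (le_max_right _ _)))
        have h := hG₂ u (rectProj_mem hr _)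
          (by rw [abs_of_nonpos hu₂0]; exact (hproj₁ t ht).trans (le_neg_of_le_neg hu₂))
        rw [abs_of_nonpos hu₂0, abs_of_neg hc] at h
        linarith [(abs_le.mp h).1, mul_nonneg (neg_nonneg.mpr hc.le) (neg_nonneg.mpr hu₂0)]
  exact fun t ht ↦
    ⟨by linarith [hge t ht], hle t ht, abs_le.mpr ⟨by linarith [hzge t ht], hzle t ht⟩⟩

theorem tendsto_zero_of_hasDerivAt_of_mem_rect (hc : c < 0)
    (hG₁ : ∀ ε > 0, ∃ κ > 0, ∀ u ∈ rect r, ε ≤ u.1 → (G u).1 ≤ -κ)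
    (hG₂ : ∀ u ∈ rect r, u.1 ≤ |u.2| → |(G u).2 - c * u.2| ≤ |c| / 2 * |u.2|)
    (hγ : ∀ t ≥ 0, HasDerivAt γ (G (γ t)) t) (hmem : ∀ t ≥ 0, γ t ∈ rect r) :
    Tendsto γ atTop (𝓝 0) := by
  have hy : Tendsto (fun t ↦ (γ t).1) atTop (𝓝 0) :=
    tendsto_zero_of_hasDerivAt_le_neg (t₀ := 0)
      (fun t ht ↦ (hγ t ht).fst) (fun t ht ↦ (hmem t ht).1.1)
      fun ε hε ↦
        let ⟨κ, hκ, h⟩ := hG₁ ε hε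
        ⟨κ, hκ, (eventually_ge_atTop 0).mono fun t ht hεt ↦ h _ (hmem t ht) hεt⟩
  -- once the first coordinate is below `√ε`, the square of the second one decays at rate `|c| ε`
  have hz : Tendsto (fun t ↦ (γ t).2 ^ 2) atTop (𝓝 0) := by
    refine tendsto_zero_of_hasDerivAt_le_neg (t₀ := 0) (u' := fun t ↦ 2 * (γ t).2 * (G (γ t)).2)
      (fun t ht ↦ by simpa using (hγ t ht).snd.fun_pow 2)
      (fun _ _ ↦ sq_nonneg _) fun ε hε ↦ ⟨-c * ε, by nlinarith, ?_⟩
    filter_upwards [eventually_ge_atTop 0, hy.eventually (ge_mem_nhds (Real.sqrt_pos.mpr hε))]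
      with t ht hyt hεz
    set z := (γ t).2
    have hyz : (γ t).1 ≤ |z| :=
      hyt.trans (by simpa [Real.sqrt_sq_eq_abs] using Real.sqrt_le_sqrt hεz)
    have h := hG₂ _ (hmem t ht) hyz
    have hcross : z * ((G (γ t)).2 - c * z) ≤ |c| / 2 * z ^ 2 :=
      calc z * ((G (γ t)).2 - c * z) ≤ |z| * |(G (γ t)).2 - c * z| := by
            rw [← abs_mul]; exact le_abs_self _
        _ ≤ |z| * (|c| / 2 * |z|) := mul_le_mul_of_nonneg_left h (abs_nonneg _)
        _ = |c| / 2 * z ^ 2 := by rw [← sq_abs z]; ring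
    rw [abs_of_neg hc] at hcross
    nlinarith
  have hz' : Tendsto (fun t ↦ (γ t).2) atTop (𝓝 0) := by
    refine (tendsto_zero_iff_abs_tendsto_zero _).mpr ?_
    simpa [Real.sqrt_sq_eq_abs, Function.comp_def] using hz.sqrt
  exact hy.prodMk_nhds hz'

end Trapping

section CenterStableSystem

variable {δ C₁ C₂ c r₀ : ℝ} {h₁ h₂ h₃ : ℝ × ℝ × ℝ → ℝ} {w : ℝ × ℝ → ℝ}

def csField (h₂ h₃ : ℝ × ℝ × ℝ → ℝ) (c : ℝ) (w : ℝ × ℝ → ℝ) (q : ℝ × ℝ) : ℝ × ℝ :=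
  (h₂ (w q, q.1, q.2), c * q.2 + h₃ (w q, q.1, q.2))

lemma closedBall_subset_ball3 (h : r₀ < δ / 2) : closedBall (0 : ℝ × ℝ × ℝ) r₀ ⊆ ball3 δ := by
  intro ξ hξ
  obtain ⟨h₁, h₂, h₃⟩ : |ξ.1| ≤ r₀ ∧ |ξ.2.1| ≤ r₀ ∧ |ξ.2.2| ≤ r₀ := by
    simpa [Prod.norm_def, max_le_iff] using hξ
  show ξ.1 ^ 2 + ξ.2.1 ^ 2 + ξ.2.2 ^ 2 < δ ^ 2
  have h₀ : 0 ≤ r₀ := (abs_nonneg _).trans h₁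
  nlinarith [sq_abs ξ.1, sq_abs ξ.2.1, sq_abs ξ.2.2, abs_nonneg ξ.1, abs_nonneg ξ.2.1,
    abs_nonneg ξ.2.2]

lemma mem_closedBall_of_mem_rect (hwrange : ∀ q ∈ rect r₀, w q ∈ Icc (-r₀) r₀) {q : ℝ × ℝ}
    (hq : q ∈ rect r₀) : (w q, q.1, q.2) ∈ closedBall (0 : ℝ × ℝ × ℝ) r₀ := by
  obtain ⟨hw, hw'⟩ := hwrange q hq
  obtain ⟨⟨hq₁, hq₁'⟩, hq₂, hq₂'⟩ := hq
  simp only [mem_closedBall, dist_zero_right, Prod.norm_def, Real.norm_eq_abs, max_le_iff, abs_le]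
  exact ⟨⟨hw, hw'⟩, ⟨by linarith, hq₁'⟩, hq₂, hq₂'⟩

lemma lipschitzOnWith_of_abs_sub_le_mul_sqrt {s : Set (ℝ × ℝ)} {f : ℝ × ℝ → ℝ} {C : ℝ}
    (hf : ∀ p ∈ s, ∀ q ∈ s, |f p - f q| ≤ C * √((p.1 - q.1) ^ 2 + (p.2 - q.2) ^ 2)) :
    LipschitzOnWith (2 * C.toNNReal) f s := by
  refine LipschitzOnWith.of_dist_le_mul fun p hp q hq ↦ ?_
  have hsqrt : √((p.1 - q.1) ^ 2 + (p.2 - q.2) ^ 2) ≤ 2 * dist p q := by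
    have h₁ : |p.1 - q.1| ≤ dist p q := by
      rw [← Real.dist_eq]; exact (le_max_left _ _).trans_eq (Prod.dist_eq ..).symm
    have h₂ : |p.2 - q.2| ≤ dist p q := by
      rw [← Real.dist_eq]; exact (le_max_right _ _).trans_eq (Prod.dist_eq ..).symm
    refine Real.sqrt_le_iff.mpr ⟨by positivity, ?_⟩
    nlinarith [sq_abs (p.1 - q.1), sq_abs (p.2 - q.2), abs_nonneg (p.1 - q.1),
      abs_nonneg (p.2 - q.2)]
  calc dist (f p) (f q) ≤ C * √((p.1 - q.1) ^ 2 + (p.2 - q.2) ^ 2) := hf p hp q hq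
    _ ≤ max C 0 * √((p.1 - q.1) ^ 2 + (p.2 - q.2) ^ 2) := by gcongr; exact le_max_left _ _
    _ ≤ max C 0 * (2 * dist p q) := by gcongr
    _ = ↑(2 * C.toNNReal) * dist p q := by push_cast [Real.coe_toNNReal']; ring

lemma exists_lipschitzOnWith_csField (hh₂ : ContDiffOn ℝ 1 h₂ (ball3 δ))
    (hh₃ : ContDiffOn ℝ 1 h₃ (ball3 δ)) (hr₀δ : r₀ < δ / 2)
    (hwlip : ∀ p₁ ∈ rect r₀, ∀ p₂ ∈ rect r₀,
      |w p₁ - w p₂| ≤ C₂ * Real.sqrt ((p₁.1 - p₂.1) ^ 2 + (p₁.2 - p₂.2) ^ 2))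
    (hwrange : ∀ q ∈ rect r₀, w q ∈ Icc (-r₀) r₀) :
    ∃ K, LipschitzOnWith K (csField h₂ h₃ c w) (rect r₀) := by
  have hlip : ∀ h : ℝ × ℝ × ℝ → ℝ, ContDiffOn ℝ 1 h (ball3 δ) →
      ∃ K, LipschitzOnWith K h (closedBall 0 r₀) := fun h hh ↦
    (hh.mono (closedBall_subset_ball3 hr₀δ)).exists_lipschitzOnWith one_ne_zero
      (convex_closedBall _ _) (isCompact_closedBall _ _)
  obtain ⟨K₂, hK₂⟩ := hlip h₂ hh₂
  obtain ⟨K₃, hK₃⟩ := hlip h₃ hh₃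
  have hlift : LipschitzOnWith _ (fun q : ℝ × ℝ ↦ (w q, q)) (rect r₀) :=
    (lipschitzOnWith_of_abs_sub_le_mul_sqrt hwlip).prodMk LipschitzWith.id.lipschitzOnWith
  have hmaps : MapsTo (fun q : ℝ × ℝ ↦ (w q, q)) (rect r₀) (closedBall 0 r₀) :=
    fun q hq ↦ mem_closedBall_of_mem_rect hwrange hq
  have hlin : LipschitzWith ‖c • ContinuousLinearMap.snd ℝ ℝ ℝ‖₊ fun q : ℝ × ℝ ↦ c * q.2 :=
    (c • ContinuousLinearMap.snd ℝ ℝ ℝ).lipschitz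
  exact ⟨_, (hK₂.comp hlift hmaps).prodMk (hlin.lipschitzOnWith.add (hK₃.comp hlift hmaps))⟩

lemma abs_csField_snd_sub_le (hC₁ : 0 ≤ C₁)
    (hbound : ∀ ξ ∈ ball3 δ, |h₁ ξ| + |h₂ ξ| + |h₃ ξ| ≤ C₁ * (ξ.1 ^ 2 + ξ.2.1 ^ 2 + ξ.2.2 ^ 2))
    (hr₀δ : r₀ < δ / 2) (hr₀c : 4 * C₁ * (1 + C₂ ^ 2) * r₀ ≤ |c|)
    (hwlip : ∀ p₁ ∈ rect r₀, ∀ p₂ ∈ rect r₀,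
      |w p₁ - w p₂| ≤ C₂ * Real.sqrt ((p₁.1 - p₂.1) ^ 2 + (p₁.2 - p₂.2) ^ 2))
    (hwrange : ∀ q ∈ rect r₀, w q ∈ Icc (-r₀) r₀) (hw0 : w (0, 0) = 0)
    {u : ℝ × ℝ} (hu : u ∈ rect r₀) (hu₁ : u.1 ≤ |u.2|) :
    |(csField h₂ h₃ c w u).2 - c * u.2| ≤ |c| / 2 * |u.2| := by
  obtain ⟨⟨hu₁0, hu₁r⟩, hu₂⟩ := id hu
  have hr₀ : 0 ≤ r₀ := hu₁0.trans hu₁r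
  have hwu : w u ^ 2 ≤ C₂ ^ 2 * (u.1 ^ 2 + u.2 ^ 2) := by
    have h : |w u| ≤ C₂ * √(u.1 ^ 2 + u.2 ^ 2) := by
      simpa [hw0] using hwlip u hu (0, 0) ⟨⟨le_rfl, hr₀⟩, neg_nonpos.mpr hr₀, hr₀⟩
    calc w u ^ 2 = |w u| ^ 2 := (sq_abs _).symm
      _ ≤ (C₂ * √(u.1 ^ 2 + u.2 ^ 2)) ^ 2 := pow_le_pow_left₀ (abs_nonneg _) h 2
      _ = C₂ ^ 2 * (u.1 ^ 2 + u.2 ^ 2) := by rw [mul_pow, Real.sq_sqrt (by positivity)]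
  have hsq : u.1 ^ 2 + u.2 ^ 2 ≤ r₀ * (u.1 + |u.2|) := by
    nlinarith [sq_abs u.2, abs_le.mpr hu₂, abs_nonneg u.2]
  have h₃u : |h₃ (w u, u.1, u.2)| ≤ C₁ * (w u ^ 2 + u.1 ^ 2 + u.2 ^ 2) := by
    have := hbound _ (closedBall_subset_ball3 hr₀δ (mem_closedBall_of_mem_rect hwrange hu))
    linarith [abs_nonneg (h₁ (w u, u.1, u.2)), abs_nonneg (h₂ (w u, u.1, u.2))]
  calc |(csField h₂ h₃ c w u).2 - c * u.2| = |h₃ (w u, u.1, u.2)| := by simp [csField]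
    _ ≤ C₁ * ((1 + C₂ ^ 2) * (r₀ * (u.1 + |u.2|))) := by
        refine h₃u.trans (mul_le_mul_of_nonneg_left ?_ hC₁)
        nlinarith [mul_le_mul_of_nonneg_left hsq (sq_nonneg C₂)]
    _ = 4 * C₁ * (1 + C₂ ^ 2) * r₀ / 4 * (u.1 + |u.2|) := by ring
    _ ≤ |c| / 4 * (|u.2| + |u.2|) := by gcongr
    _ = |c| / 2 * |u.2| := by ring

end CenterStableSystem

theorem stmt17_general (δ : ℝ) (h₁ h₂ h₃ : ℝ × ℝ × ℝ → ℝ)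
    (C₁ p : ℝ) (hC₁ : 0 < C₁) (hp : 1 < p) (hhyp : CSHyp δ h₁ h₂ h₃ C₁ p)
    (c : ℝ) (hc : c < 0)
    (C₂ : ℝ) (r₀ : ℝ) (hr₀0 : 0 < r₀) (hr₀δ : r₀ < δ / 2)
    (hr₀c : 4 * C₁ * (1 + C₂ ^ 2) * r₀ ≤ |c|)
    (w : ℝ × ℝ → ℝ)
    (hwlip : ∀ p₁ ∈ rect r₀, ∀ p₂ ∈ rect r₀,
      |w p₁ - w p₂| ≤ C₂ * Real.sqrt ((p₁.1 - p₂.1) ^ 2 + (p₁.2 - p₂.2) ^ 2))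
    (hwrange : ∀ pt ∈ rect r₀, w pt ∈ Set.Icc (-r₀) r₀)
    (hw0 : w (0, 0) = 0) :
    ∀ y₀ ∈ Set.Icc (0 : ℝ) r₀, ∀ z₀ ∈ Set.Icc (-r₀) r₀,
      ∃ y z : ℝ → ℝ,
        y 0 = y₀ ∧ z 0 = z₀ ∧
        (∀ t : ℝ, 0 ≤ t →
          HasDerivAt y (h₂ (w (y t, z t), y t, z t)) t ∧
          HasDerivAt z (c * z t + h₃ (w (y t, z t), y t, z t)) t) ∧
        (∀ t : ℝ, 0 ≤ t → 0 ≤ y t ∧ y t ≤ y₀ ∧ |z t| ≤ max y₀ |z₀|) ∧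
        Tendsto (fun t : ℝ => (y t, z t)) atTop (𝓝 (0, 0)) := by
  intro y₀ hy₀ z₀ hz₀
  obtain ⟨-, hh₂, hh₃, hbound, -, hneg, hzero⟩ := hhyp
  have hball : ∀ u ∈ rect r₀, (w u, u.1, u.2) ∈ ball3 δ := fun u hu ↦
    closedBall_subset_ball3 hr₀δ (mem_closedBall_of_mem_rect hwrange hu)
  have hG₁ : ∀ u ∈ rect r₀, (csField h₂ h₃ c w u).1 ≤ -C₁ * |u.1| ^ p :=
    fun u hu ↦ hneg _ (hball u hu)
  have hG₂ := fun u (hu : u ∈ rect r₀) ↦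
    abs_csField_snd_sub_le (h₂ := h₂) hC₁.le hbound hr₀δ hr₀c hwlip hwrange hw0 hu
  obtain ⟨K, hK⟩ := exists_lipschitzOnWith_csField (c := c) hh₂ hh₃ hr₀δ hwlip hwrange
  obtain ⟨γ, hγ₀, hγ⟩ := exists_isIntegralCurve_comp_rectProj hr₀0.le hK (y₀, z₀)
  have hbounds := hγ.bounds_of_comp_rectProj hr₀0.le hc
    (fun u hu ↦ (hG₁ u hu).trans (by nlinarith [Real.rpow_nonneg (abs_nonneg u.1) p]))
    (fun u hu hu₁ ↦ by simpa [csField, hu₁] using hzero _ _ (hu₁ ▸ hball u hu))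
    hG₂ (hγ₀ ▸ ⟨hy₀, hz₀⟩)
  rw [hγ₀] at hbounds
  have hmem : ∀ t ≥ 0, γ t ∈ rect r₀ := fun t ht ↦
    ⟨⟨(hbounds t ht).1, (hbounds t ht).2.1.trans hy₀.2⟩,
      abs_le.mp ((hbounds t ht).2.2.trans (max_le hy₀.2 (abs_le.mpr hz₀)))⟩
  have hsol : ∀ t ≥ 0, HasDerivAt γ (csField h₂ h₃ c w (γ t)) t := fun t ht ↦ by
    simpa [rectProj_of_mem (hmem t ht)] using hγ t
  refine ⟨fun t ↦ (γ t).1, fun t ↦ (γ t).2, by simp [hγ₀], by simp [hγ₀],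
    fun t ht ↦ ⟨(hsol t ht).fst, (hsol t ht).snd⟩, hbounds, ?_⟩
  refine tendsto_zero_of_hasDerivAt_of_mem_rect hc
    (fun ε hε ↦ ⟨C₁ * ε ^ p, by positivity, fun u hu hεu ↦ ?_⟩) hG₂ hsol hmem
  have := Real.rpow_le_rpow hε.le (hεu.trans (le_abs_self _)) (by linarith : 0 ≤ p)
  nlinarith [hG₁ u hu]

theorem stmt17 (δ : ℝ) (hδ : 0 < δ) (h₁ h₂ h₃ : ℝ × ℝ × ℝ → ℝ)
    (C₁ p : ℝ) (hC₁ : 0 < C₁) (hp : 1 < p) (hhyp : CSHyp δ h₁ h₂ h₃ C₁ p)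
    (a c : ℝ) (ha : 0 < a) (hc : c < 0)
    (C₂ : ℝ) (hC₂ : 0 < C₂) (r₀ : ℝ) (hr₀0 : 0 < r₀) (hr₀δ : r₀ < δ / 2)
    (hr₀c : 4 * C₁ * (1 + C₂ ^ 2) * r₀ ≤ |c|)
    (w : ℝ × ℝ → ℝ)
    (hwlip : ∀ p₁ ∈ rect r₀, ∀ p₂ ∈ rect r₀,
      |w p₁ - w p₂| ≤ C₂ * Real.sqrt ((p₁.1 - p₂.1) ^ 2 + (p₁.2 - p₂.2) ^ 2))
    (hwrange : ∀ pt ∈ rect r₀, w pt ∈ Set.Icc (-r₀) r₀)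
    (hw0 : w (0, 0) = 0) :
    ∀ y₀ ∈ Set.Icc (0 : ℝ) r₀, ∀ z₀ ∈ Set.Icc (-r₀) r₀,
      ∃ y z : ℝ → ℝ,
        y 0 = y₀ ∧ z 0 = z₀ ∧
        (∀ t : ℝ, 0 ≤ t →
          HasDerivAt y (h₂ (w (y t, z t), y t, z t)) t ∧
          HasDerivAt z (c * z t + h₃ (w (y t, z t), y t, z t)) t) ∧
        (∀ t : ℝ, 0 ≤ t → 0 ≤ y t ∧ y t ≤ y₀ ∧ |z t| ≤ max y₀ |z₀|) ∧
        Tendsto (fun t : ℝ => (y t, z t)) atTop (𝓝 (0, 0)) :=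
  stmt17_general δ h₁ h₂ h₃ C₁ p hC₁ hp hhyp c hc C₂ r₀ hr₀0 hr₀δ hr₀c w hwlip hwrange hw0
end
end
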